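/- arXiv:1908.03228 — 7 statements merged into one kernel-verified Lean document; each statement's English description precedes it below -/
import Mathlib

section
/- Let A be a group, B an abelian group, and η, ρ : B → Aut(A) group homomorphisms such that every element of the image of ρ commutes with every element of the image of η. Define on the set A × B two operations: (x,s) + (y,t) = (x·η_s(y), s+t) and (x,s) ∘ (y,t) = (x·ρ_s(y), s+t). Then (A×B, +, ∘) is a skew left brace, i.e. (a ∘ (b + c)) = (a ∘ b) - a + (a ∘ c) holds for all a, b, c. -/
/-- `(op, e, inv)` is a group structure on `A`. -/
def IsGroupOp {A : Type*} (op : A → A → A) (e : A) (inv : A → A) : Prop :=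
  (∀ a b c, op (op a b) c = op a (op b c)) ∧ (∀ a, op e a = a) ∧ (∀ a, op a e = a) ∧
  (∀ a, op (inv a) a = e) ∧ (∀ a, op a (inv a) = e)

/-- `(A, add, mul)` is a skew left brace: both operations are group operations and
`a ∘ (b + c) = (a ∘ b - a) + a ∘ c`. -/
def IsSkewBrace {A : Type*} (add : A → A → A) (zero : A) (neg : A → A)
    (mul : A → A → A) (one : A) (inv : A → A) : Prop :=
  IsGroupOp add zero neg ∧ IsGroupOp mul one inv ∧
  ∀ a b c, mul a (add b c) = add (add (mul a b) (neg a)) (mul a c)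

lemma semidirect_isGroupOp {A B : Type*} [Group A] [CommGroup B] (φ : B →* MulAut A) :
    IsGroupOp (fun x y : A × B => (x.1 * φ x.2 y.1, x.2 * y.2)) (1, 1)
      (fun x : A × B => ((φ x.2⁻¹ x.1)⁻¹, x.2⁻¹)) := by
  refine ⟨?_, ?_, ?_, ?_, ?_⟩ <;> intros <;>
    simp [Prod.ext_iff, mul_assoc, map_mul, map_inv, MulAut.mul_apply, MulAut.inv_def,
      MulEquiv.apply_symm_apply, MulEquiv.symm_apply_apply]

theorem stmt0 {A B : Type*} [Group A] [CommGroup B]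
    (η ρ : B →* MulAut A)
    (hcomm : ∀ s t : B, ∀ a : A, ρ s (η t a) = η t (ρ s a)) :
    IsSkewBrace
      (fun x y : A × B => (x.1 * η x.2 y.1, x.2 * y.2)) (1, 1)
      (fun x : A × B => ((η x.2⁻¹ x.1)⁻¹, x.2⁻¹))
      (fun x y : A × B => (x.1 * ρ x.2 y.1, x.2 * y.2)) (1, 1)
      (fun x : A × B => ((ρ x.2⁻¹ x.1)⁻¹, x.2⁻¹)) := by
  refine ⟨semidirect_isGroupOp η, semidirect_isGroupOp ρ, ?_⟩
  rintro ⟨a1, a2⟩ ⟨b1, b2⟩ ⟨c1, c2⟩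
  refine Prod.ext ?_ ?_
  · show a1 * ρ a2 (b1 * η b2 c1) =
      a1 * ρ a2 b1 * η (a2 * b2) (η a2⁻¹ a1)⁻¹ * η (a2 * b2 * a2⁻¹) (a1 * ρ a2 c1)
    have h2 : a2 * b2 * a2⁻¹ = b2 := by rw [mul_comm a2 b2, mul_inv_cancel_right]
    have key : η (a2 * b2) ((η a2⁻¹) a1)⁻¹ = (η b2 a1)⁻¹ := by
      rw [map_inv, ← MulAut.mul_apply, ← map_mul, h2]
    rw [h2, key]
    simp [map_mul, hcomm, mul_assoc]
  · show a2 * (b2 * c2) = a2 * b2 * a2⁻¹ * (a2 * c2)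
    group
end

section
/- Let A be a group, B an abelian group, and η, ρ : B → Aut(A) homomorphisms with commuting images. In the skew brace (A×B, +, ∘) with (x,s)+(y,t) = (x·η_s(y), s+t) and (x,s)∘(y,t) = (x·ρ_s(y), s+t), the lambda map satisfies λ_{(x,s)}(y,t) = (η_{-s}(ρ_s(y)), t); in particular A × {0} is contained in the kernel of λ. -/
section

variable {A B : Type*} [Group A] [CommGroup B] (η ρ : B →* MulAut A)

/-- The addition `(x,s) + (y,t) = (x·η_s(y), s·t)` of the semidirect product `A ⋊_η B`. -/
def sdAdd (x y : A × B) : A × B := (x.1 * η x.2 y.1, x.2 * y.2)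

/-- The negation (inverse for `sdAdd`) in `A ⋊_η B`. -/
def sdNeg (x : A × B) : A × B := ((η x.2⁻¹ x.1)⁻¹, x.2⁻¹)

/-- The multiplication `(x,s) ∘ (y,t) = (x·ρ_s(y), s·t)` of the semidirect product `A ⋊_ρ B`. -/
def sdMul (x y : A × B) : A × B := (x.1 * ρ x.2 y.1, x.2 * y.2)

/-- The lambda map of the skew brace: `λ_a(b) = -a + (a ∘ b)`. -/
def sdLam (a b : A × B) : A × B := sdAdd η (sdNeg η a) (sdMul ρ a b)

end

/-- In the skew brace `(A × B, +, ∘)` (with `B` abelian and the images of `η` and `ρ`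
commuting) one has `λ_{(x,s)}(y,t) = (η_{s⁻¹}(ρ_s(y)), t)`; in particular `A × {1}`
is contained in the kernel of `λ`. -/
theorem stmt1 {A B : Type*} [Group A] [CommGroup B]
    (η ρ : B →* MulAut A)
    (hcomm : ∀ s t : B, ∀ a : A, ρ s (η t a) = η t (ρ s a)) :
    (∀ (x : A) (s : B) (y : A) (t : B),
        sdLam η ρ (x, s) (y, t) = (η s⁻¹ (ρ s y), t)) ∧
    (∀ (x : A), ∀ b : A × B, sdLam η ρ (x, 1) b = b) := by
  have key : ∀ (x : A) (s : B) (y : A) (t : B),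
      sdLam η ρ (x, s) (y, t) = (η s⁻¹ (ρ s y), t) := by
    intro x s y t
    simp [sdLam, sdAdd, sdNeg, sdMul, map_mul, mul_assoc]
  refine ⟨key, fun x b => ?_⟩
  rw [show b = (b.1, b.2) from rfl, key]
  simp
end

section
/- Let (A,+) be a group and ∘ an operation making (A,+,∘) a skew brace. Then the set {(a, λ_a) : a ∈ A} is a regular subgroup of the holomorph Hol(A,+) = A ⋊ Aut(A,+), where λ_a(b) = -a + a∘b. -/
/-- `g : A → A` is an element of the holomorph `Hol(A,+) = A ⋊ Aut(A,+)`, viewed as a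
permutation of `A` via `(a,f)(b) = a + f(b)`. -/
def InHol {A : Type*} (add : A → A → A) (g : A → A) : Prop :=
  ∃ (a : A) (f : A → A), Function.Bijective f ∧
    (∀ x y, f (add x y) = add (f x) (f y)) ∧ ∀ x, g x = add a (f x)

/-- If `(A,+,∘)` is a skew brace, then `{(a, λ_a) : a ∈ A}` is a regular subgroup of
`Hol(A,+)`.  Here `(a, λ_a)` acts on `A` as the permutation `b ↦ a ∘ b`
(since `a ∘ b = a + λ_a(b)`), so the claim is that `T = {b ↦ a ∘ b | a ∈ A}` is a
subgroup of permutations of `A`, contained in the holomorph, acting regularly on `A`. -/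
theorem stmt4 {A : Type*} (add : A → A → A) (zero : A) (neg : A → A)
    (mul : A → A → A) (one : A) (inv : A → A)
    (h : IsSkewBrace add zero neg mul one inv) :
    (∀ g ∈ {f : A → A | ∃ a, f = fun b => mul a b}, InHol add g) ∧
    (id ∈ {f : A → A | ∃ a, f = fun b => mul a b}) ∧
    (∀ g ∈ {f : A → A | ∃ a, f = fun b => mul a b},
      ∀ g' ∈ {f : A → A | ∃ a, f = fun b => mul a b},
        (g ∘ g') ∈ {f : A → A | ∃ a, f = fun b => mul a b}) ∧
    (∀ g ∈ {f : A → A | ∃ a, f = fun b => mul a b},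
      ∃ g' ∈ {f : A → A | ∃ a, f = fun b => mul a b}, g ∘ g' = id ∧ g' ∘ g = id) ∧
    (∀ x y : A, ∃! g : A → A, g ∈ {f : A → A | ∃ a, f = fun b => mul a b} ∧ g x = y) := by
  obtain ⟨⟨aadd, zadd, azadd, nadd, anadd⟩, ⟨amul, omul, aomul, imul, aimul⟩, compat⟩ := h
  -- basic add lemmas
  have L1 : ∀ a b : A, add (neg a) (add a b) = b := fun a b => by
    rw [← aadd, nadd, zadd]
  have L2 : ∀ a b : A, add a (add (neg a) b) = b := fun a b => by
    rw [← aadd, anadd, zadd]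
  -- mul left cancellation
  have cancel : ∀ a b c : A, mul a b = mul a c → b = c := by
    intro a b c hbc
    have := congrArg (mul (inv a)) hbc
    rwa [← amul, ← amul, imul, omul, omul] at this
  have cancelr : ∀ a b c : A, mul a c = mul b c → a = b := by
    intro a b c hbc
    have := congrArg (fun x => mul x (inv c)) hbc
    simp only [amul, aimul, aomul] at this
    exact this
  refine ⟨?_, ?_, ?_, ?_, ?_⟩
  · rintro g ⟨a, rfl⟩
    refine ⟨a, fun b => add (neg a) (mul a b), ⟨?_, ?_⟩, ?_, ?_⟩
    · intro x y hxy
      have h2 : mul a x = mul a y := by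
        have := congrArg (add a) hxy
        rwa [L2, L2] at this
      exact cancel a x y h2
    · intro y
      refine ⟨mul (inv a) (add a y), ?_⟩
      show add (neg a) (mul a (mul (inv a) (add a y))) = y
      rw [← amul, aimul, omul, L1]
    · intro x y
      show add (neg a) (mul a (add x y)) = _
      rw [compat]
      calc add (neg a) (add (add (mul a x) (neg a)) (mul a y))
          = add (add (neg a) (add (mul a x) (neg a))) (mul a y) := (aadd _ _ _).symm
        _ = add (add (add (neg a) (mul a x)) (neg a)) (mul a y) := by rw [aadd (neg a) (mul a x) (neg a)]
        _ = add (add (neg a) (mul a x)) (add (neg a) (mul a y)) := aadd _ _ _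
    · intro x
      exact (L2 a (mul a x)).symm
  · exact ⟨one, funext fun b => (omul b).symm⟩
  · rintro g ⟨a, rfl⟩ g' ⟨a', rfl⟩
    exact ⟨mul a a', funext fun b => (amul a a' b).symm⟩
  · rintro g ⟨a, rfl⟩
    refine ⟨fun b => mul (inv a) b, ⟨inv a, rfl⟩, ?_, ?_⟩
    · funext b; show mul a (mul (inv a) b) = b; rw [← amul, aimul, omul]
    · funext b; show mul (inv a) (mul a b) = b; rw [← amul, imul, omul]
  · intro x y
    refine ⟨fun b => mul (mul y (inv x)) b, ⟨⟨mul y (inv x), rfl⟩, ?_⟩, ?_⟩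
    · show mul (mul y (inv x)) x = y
      rw [amul, imul, aomul]
    · rintro g ⟨⟨a, rfl⟩, hx⟩
      have : mul a x = mul (mul y (inv x)) x := by
        rw [amul, imul, aomul]; exact hx
      rw [cancelr _ _ _ this]
end

section
/- Let p > q be primes with p ≡ 1 (mod q), and let M = ⟨σ, τ | σ^p = τ^q = 1, τσ = σ^g τ⟩ where g has multiplicative order q modulo p. Then the automorphisms of M are exactly the maps φ_{i,j} for 1 ≤ i ≤ p-1, 0 ≤ j ≤ p-1 determined by φ_{i,j}(σ) = σ^i and φ_{i,j}(τ) = σ^j τ; in particular |Aut(M)| = p(p-1). -/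
open SemidirectProduct Multiplicative

section Aux

variable {p q : ℕ} {g : ZMod p}
  {φ : Multiplicative (ZMod q) →* MulAut (Multiplicative (ZMod p))}
  (hφ : ∀ (m : ZMod q) (n : ZMod p),
      φ (ofAdd m) (ofAdd n) = ofAdd (g ^ m.val * n))

include hφ in
theorem phi_apply (h : Multiplicative (ZMod q)) (n : Multiplicative (ZMod p)) :
    φ h n = ofAdd (g ^ h.toAdd.val * n.toAdd) := hφ h.toAdd n.toAdd

include hφ in
/-- the hom `σ ↦ σ^u`, `τ ↦ σ^t τ σ^{-t}` -/
def Fhom (u t : ZMod p) : (Multiplicative (ZMod p) ⋊[φ] Multiplicative (ZMod q)) →*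
    (Multiplicative (ZMod p) ⋊[φ] Multiplicative (ZMod q)) :=
  (MulAut.conj (inl (ofAdd t))).toMonoidHom.comp <|
    SemidirectProduct.lift
      (SemidirectProduct.inl.comp (AddMonoidHom.toMultiplicative (AddMonoidHom.mulLeft u)))
      SemidirectProduct.inr
      (by
        intro h
        refine MonoidHom.ext fun n => ?_
        simp only [MonoidHom.comp_apply, MulEquiv.coe_toMonoidHom, MulAut.conj_apply,
          AddMonoidHom.toMultiplicative_apply_apply, AddMonoidHom.coe_mulLeft]
        rw [← map_inv, ← SemidirectProduct.inl_aut]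
        rw [phi_apply hφ, phi_apply hφ]
        simp only [toAdd_ofAdd]
        ring_nf)

theorem Fhom_inl (u t : ZMod p) (n : Multiplicative (ZMod p)) :
    Fhom hφ u t (SemidirectProduct.inl n) = SemidirectProduct.inl (ofAdd (u * n.toAdd)) := by
  refine SemidirectProduct.ext ?_ ?_ <;>
    simp [Fhom, phi_apply hφ, toAdd_mul, div_eq_mul_inv, ← map_inv, ← map_mul] <;> ring

theorem Fhom_inr (u t : ZMod p) (h : Multiplicative (ZMod q)) :
    Fhom hφ u t (SemidirectProduct.inr h) =
      SemidirectProduct.inl (ofAdd (t - g ^ h.toAdd.val * t)) * SemidirectProduct.inr h := by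
  refine SemidirectProduct.ext ?_ ?_ <;>
    simp [Fhom, phi_apply hφ, toAdd_mul, div_eq_mul_inv, ← map_inv, ← map_mul] <;> ring

include hφ in
theorem Fhom_comp (u t u' t' : ZMod p) :
    (Fhom hφ u t).comp (Fhom hφ u' t') = Fhom hφ (u * u') (u * t' + t) := by
  refine SemidirectProduct.hom_ext (MonoidHom.ext fun n => ?_) (MonoidHom.ext fun h => ?_)
  · simp only [MonoidHom.comp_apply, Fhom_inl hφ, toAdd_ofAdd]
    rw [← mul_assoc]
  · simp only [MonoidHom.comp_apply]
    rw [Fhom_inr hφ, map_mul, Fhom_inl hφ, Fhom_inr hφ, Fhom_inr hφ]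
    rw [← mul_assoc, ← map_mul, ← ofAdd_add, toAdd_ofAdd]
    congr 2
    ring

include hφ in
theorem Fhom_one : Fhom hφ (1 : ZMod p) 0 = MonoidHom.id _ := by
  refine SemidirectProduct.hom_ext (MonoidHom.ext fun n => ?_) (MonoidHom.ext fun h => ?_) <;>
    simp [Fhom_inl hφ, Fhom_inr hφ]

/-- The automorphism `σ ↦ σ^u`, `τ ↦ σ^t τ σ^{-t}`. -/
def Eequiv (u : (ZMod p)ˣ) (t : ZMod p) :
    (Multiplicative (ZMod p) ⋊[φ] Multiplicative (ZMod q)) ≃*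
    (Multiplicative (ZMod p) ⋊[φ] Multiplicative (ZMod q)) :=
  MonoidHom.toMulEquiv (Fhom hφ (u : ZMod p) t)
    (Fhom hφ ((u⁻¹ : (ZMod p)ˣ) : ZMod p) (-(((u⁻¹ : (ZMod p)ˣ) : ZMod p) * t)))
    (by rw [Fhom_comp hφ]; rw [show ((u⁻¹ : (ZMod p)ˣ) : ZMod p) * u = 1 by
          exact_mod_cast u.inv_mul,
        show ((u⁻¹ : (ZMod p)ˣ) : ZMod p) * t + -(((u⁻¹ : (ZMod p)ˣ) : ZMod p) * t) = 0 by ring,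
        Fhom_one hφ])
    (by rw [Fhom_comp hφ]; rw [show (u : ZMod p) * ((u⁻¹ : (ZMod p)ˣ) : ZMod p) = 1 by
          exact_mod_cast u.mul_inv,
        show (u : ZMod p) * -(((u⁻¹ : (ZMod p)ˣ) : ZMod p) * t) + t = 0 by
          rw [neg_mul_eq_mul_neg, ← mul_assoc,
            show (u : ZMod p) * ((u⁻¹ : (ZMod p)ˣ) : ZMod p) = 1 by exact_mod_cast u.mul_inv];
          ring,
        Fhom_one hφ])

theorem Eequiv_apply (u : (ZMod p)ˣ) (t : ZMod p) (x) :
    Eequiv hφ u t x = Fhom hφ (u : ZMod p) t x := rfl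

section Gen
variable [NeZero p] [NeZero q]

theorem inl_pow (k : ℕ) :
    (SemidirectProduct.inl (φ := φ) (ofAdd (1 : ZMod p))) ^ k =
      SemidirectProduct.inl (ofAdd (k : ZMod p)) := by
  rw [← map_pow]
  congr 1
  rw [← ofAdd_nsmul]
  simp [nsmul_eq_mul]

theorem inr_pow (k : ℕ) :
    (SemidirectProduct.inr (φ := φ) (ofAdd (1 : ZMod q))) ^ k =
      SemidirectProduct.inr (ofAdd (k : ZMod q)) := by
  rw [← map_pow]
  congr 1
  rw [← ofAdd_nsmul]
  simp [nsmul_eq_mul]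

theorem inl_eq_pow (n : ZMod p) :
    (SemidirectProduct.inl (φ := φ) (ofAdd n)) =
      (SemidirectProduct.inl (φ := φ) (ofAdd (1 : ZMod p))) ^ n.val := by
  rw [inl_pow]
  simp [ZMod.natCast_val, ZMod.cast_id]

theorem inr_eq_pow (h : ZMod q) :
    (SemidirectProduct.inr (φ := φ) (ofAdd h)) =
      (SemidirectProduct.inr (φ := φ) (ofAdd (1 : ZMod q))) ^ h.val := by
  rw [inr_pow]
  simp [ZMod.natCast_val, ZMod.cast_id]

theorem decomp (x : Multiplicative (ZMod p) ⋊[φ] Multiplicative (ZMod q)) :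
    x = (SemidirectProduct.inl (φ := φ) (ofAdd (1 : ZMod p))) ^ x.left.toAdd.val *
      (SemidirectProduct.inr (φ := φ) (ofAdd (1 : ZMod q))) ^ x.right.toAdd.val := by
  rw [← inl_eq_pow, ← inr_eq_pow, ofAdd_toAdd, ofAdd_toAdd,
    SemidirectProduct.inl_left_mul_inr_right]

theorem equiv_ext {f f' : (Multiplicative (ZMod p) ⋊[φ] Multiplicative (ZMod q)) ≃*
      (Multiplicative (ZMod p) ⋊[φ] Multiplicative (ZMod q))}
    (h1 : f (SemidirectProduct.inl (ofAdd (1 : ZMod p))) =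
      f' (SemidirectProduct.inl (ofAdd (1 : ZMod p))))
    (h2 : f (SemidirectProduct.inr (ofAdd (1 : ZMod q))) =
      f' (SemidirectProduct.inr (ofAdd (1 : ZMod q)))) : f = f' := by
  refine MulEquiv.ext fun x => ?_
  rw [decomp x, map_mul, map_mul, map_pow, map_pow, map_pow, map_pow, h1, h2]

end Gen

include hφ in
theorem conj_inl (y : Multiplicative (ZMod p) ⋊[φ] Multiplicative (ZMod q))
    (x : Multiplicative (ZMod p)) :
    y * SemidirectProduct.inl x = SemidirectProduct.inl (φ y.right x) * y := by
  refine SemidirectProduct.ext ?_ ?_ <;>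
    refine Multiplicative.toAdd.injective ?_ <;>
      simp [phi_apply hφ, toAdd_mul] <;> ring

include hφ in
theorem classify [Fact p.Prime] [Fact q.Prime] (hg : orderOf g = q)
    (hpq : (p : ZMod q) = 1)
    (f : (Multiplicative (ZMod p) ⋊[φ] Multiplicative (ZMod q)) ≃*
      (Multiplicative (ZMod p) ⋊[φ] Multiplicative (ZMod q))) :
    ∃ i j : ZMod p, i ≠ 0 ∧
      f (SemidirectProduct.inl (ofAdd (1 : ZMod p))) = SemidirectProduct.inl (ofAdd i) ∧
      f (SemidirectProduct.inr (ofAdd (1 : ZMod q))) =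
        SemidirectProduct.inl (ofAdd j) * SemidirectProduct.inr (ofAdd (1 : ZMod q)) := by
  haveI : Fact (1 < q) := ⟨(Fact.out : q.Prime).one_lt⟩
  set σ : Multiplicative (ZMod p) ⋊[φ] Multiplicative (ZMod q) :=
    SemidirectProduct.inl (ofAdd (1 : ZMod p)) with hσ
  set τ : Multiplicative (ZMod p) ⋊[φ] Multiplicative (ZMod q) :=
    SemidirectProduct.inr (ofAdd (1 : ZMod q)) with hτ
  -- the image of σ lies in inl
  have hσp : σ ^ p = 1 := by rw [hσ, inl_pow]; simp
  have h1 : SemidirectProduct.rightHom ((f σ) ^ p) = 1 := by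
    rw [← map_pow, hσp, map_one, map_one]
  rw [map_pow] at h1
  have h2 : (p : ZMod q) * (SemidirectProduct.rightHom (f σ)).toAdd = 0 := by
    have := congrArg Multiplicative.toAdd h1
    rwa [toAdd_pow, toAdd_one, nsmul_eq_mul] at this
  rw [hpq, one_mul] at h2
  have hright : (f σ).right = 1 := by
    have : SemidirectProduct.rightHom (f σ) = 1 := by
      rw [← ofAdd_toAdd (SemidirectProduct.rightHom (f σ)), h2, ofAdd_zero]
    rwa [SemidirectProduct.rightHom_eq_right] at this
  have hfσ : f σ = SemidirectProduct.inl (ofAdd (f σ).left.toAdd) := by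
    conv_lhs => rw [← SemidirectProduct.inl_left_mul_inr_right (f σ)]
    rw [hright, map_one, mul_one, ofAdd_toAdd]
  set i : ZMod p := (f σ).left.toAdd with hi
  have hine : i ≠ 0 := by
    intro h0
    have h1' : f σ = f 1 := by rw [hfσ, h0, ofAdd_zero, map_one, map_one]
    have h2' : σ = 1 := f.injective h1'
    rw [hσ] at h2'
    have h3' : (SemidirectProduct.inl (φ := φ) (ofAdd (1 : ZMod p))) =
        SemidirectProduct.inl 1 := by rw [h2', map_one]
    exact one_ne_zero (ofAdd_eq_one.mp (SemidirectProduct.inl_injective h3'))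
  -- the relation
  have hval1 : (1 : ZMod q).val = 1 := ZMod.val_one q
  have hrel : τ * σ * τ⁻¹ = SemidirectProduct.inl (ofAdd g) := by
    rw [hτ, hσ, ← map_inv, ← SemidirectProduct.inl_aut, phi_apply hφ]
    simp [hval1]
  have hrel2 : f τ * f σ * (f τ)⁻¹ = SemidirectProduct.inl (ofAdd (g * i)) := by
    rw [← map_inv, ← map_mul, ← map_mul, hrel]
    rw [inl_eq_pow g, map_pow, hfσ, ← map_pow]
    congr 1
    rw [← ofAdd_nsmul, nsmul_eq_mul, ZMod.natCast_val, ZMod.cast_id]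
  rw [hfσ] at hrel2
  rw [mul_inv_eq_iff_eq_mul, conj_inl hφ] at hrel2
  have hcan := mul_right_cancel hrel2
  have hexp : g ^ (f τ).right.toAdd.val * i = g * i := by
    have := SemidirectProduct.inl_injective hcan
    rw [phi_apply hφ, toAdd_ofAdd] at this
    exact Multiplicative.ofAdd.injective this
  have hgexp : g ^ (f τ).right.toAdd.val = g := mul_right_cancel₀ hine hexp
  have hgq : g ^ q = 1 := hg ▸ pow_orderOf_eq_one g
  have hg0 : g ≠ 0 := by
    intro h
    rw [h, zero_pow (Fact.out : q.Prime).ne_zero] at hgq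
    exact zero_ne_one hgq
  have hg1 : g ≠ 1 := by
    intro h
    rw [h, orderOf_one] at hg
    exact (Fact.out : q.Prime).one_lt.ne' hg.symm
  set v := (f τ).right.toAdd.val with hv
  have hvne : v ≠ 0 := by
    intro h
    rw [h, pow_zero] at hgexp
    exact hg1 hgexp.symm
  have hsub : g ^ (v - 1) = 1 := by
    have h' : g ^ (v - 1) * g = 1 * g := by
      rw [← pow_succ, Nat.sub_add_cancel (Nat.one_le_iff_ne_zero.mpr hvne), hgexp, one_mul]
    exact mul_right_cancel₀ hg0 h'
  have hdvd : q ∣ v - 1 := hg ▸ orderOf_dvd_of_pow_eq_one hsub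
  have hvlt : v < q := ZMod.val_lt _
  have hv1 : v = 1 := by
    have := Nat.eq_zero_of_dvd_of_lt hdvd
    omega
  have hfτr : (f τ).right = ofAdd (1 : ZMod q) := by
    have h' : (f τ).right.toAdd = (1 : ZMod q) := by
      have := congrArg (Nat.cast : ℕ → ZMod q) hv1
      rwa [hv, ZMod.natCast_val, ZMod.cast_id, Nat.cast_one] at this
    rw [← ofAdd_toAdd (f τ).right, h']
  refine ⟨i, (f τ).left.toAdd, hine, hfσ, ?_⟩
  conv_lhs => rw [← SemidirectProduct.inl_left_mul_inr_right (f τ)]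
  rw [hfτr, ofAdd_toAdd]

include hφ in
theorem Eequiv_sigma (u : (ZMod p)ˣ) (t : ZMod p) :
    Eequiv hφ u t (SemidirectProduct.inl (ofAdd (1 : ZMod p))) =
      SemidirectProduct.inl (ofAdd (u : ZMod p)) := by
  rw [Eequiv_apply, Fhom_inl hφ, toAdd_ofAdd, mul_one]

include hφ in
theorem Eequiv_tau [Fact (1 < q)] (u : (ZMod p)ˣ) (t : ZMod p) :
    Eequiv hφ u t (SemidirectProduct.inr (ofAdd (1 : ZMod q))) =
      SemidirectProduct.inl (ofAdd (t - g * t)) * SemidirectProduct.inr (ofAdd (1 : ZMod q)) := by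
  rw [Eequiv_apply, Fhom_inr hφ, toAdd_ofAdd, ZMod.val_one, pow_one]

end Aux

/-- Let `M = ⟨σ, τ | σ^p = τ^q = 1, τσ = σ^g τ⟩` (with `g` of multiplicative order `q`
mod `p`), realized as the semidirect product `ℤ_p ⋊[φ] ℤ_q`.  The automorphisms of `M`
are exactly the maps `φ_{i,j}` for `i ∈ (ℤ_p)^×`, `j ∈ ℤ_p`, determined by
`φ_{i,j}(σ) = σ^i` and `φ_{i,j}(τ) = σ^j τ`; in particular `|Aut(M)| = p(p-1)`. -/
theorem stmt9 (p q : ℕ) (hp : p.Prime) (hq : q.Prime) (hlt : q < p)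
    (hmod : p % q = 1) (g : ZMod p) (hg : orderOf g = q)
    (φ : Multiplicative (ZMod q) →* MulAut (Multiplicative (ZMod p)))
    (hφ : ∀ (m : ZMod q) (n : ZMod p),
      φ (Multiplicative.ofAdd m) (Multiplicative.ofAdd n) =
        Multiplicative.ofAdd (g ^ m.val * n)) :
    (∀ f : (Multiplicative (ZMod p) ⋊[φ] Multiplicative (ZMod q)) ≃*
        (Multiplicative (ZMod p) ⋊[φ] Multiplicative (ZMod q)),
      ∃ i j : ZMod p, i ≠ 0 ∧
        f (SemidirectProduct.inl (Multiplicative.ofAdd (1 : ZMod p))) =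
          (SemidirectProduct.inl (Multiplicative.ofAdd (1 : ZMod p))) ^ i.val ∧
        f (SemidirectProduct.inr (Multiplicative.ofAdd (1 : ZMod q))) =
          (SemidirectProduct.inl (Multiplicative.ofAdd (1 : ZMod p))) ^ j.val *
            SemidirectProduct.inr (Multiplicative.ofAdd (1 : ZMod q))) ∧
    (∀ i j : ZMod p, i ≠ 0 →
      ∃! f : (Multiplicative (ZMod p) ⋊[φ] Multiplicative (ZMod q)) ≃*
          (Multiplicative (ZMod p) ⋊[φ] Multiplicative (ZMod q)),
        f (SemidirectProduct.inl (Multiplicative.ofAdd (1 : ZMod p))) =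
          (SemidirectProduct.inl (Multiplicative.ofAdd (1 : ZMod p))) ^ i.val ∧
        f (SemidirectProduct.inr (Multiplicative.ofAdd (1 : ZMod q))) =
          (SemidirectProduct.inl (Multiplicative.ofAdd (1 : ZMod p))) ^ j.val *
            SemidirectProduct.inr (Multiplicative.ofAdd (1 : ZMod q))) ∧
    Nat.card ((Multiplicative (ZMod p) ⋊[φ] Multiplicative (ZMod q)) ≃*
        (Multiplicative (ZMod p) ⋊[φ] Multiplicative (ZMod q))) = p * (p - 1) := by
  haveI : Fact p.Prime := ⟨hp⟩
  haveI : Fact q.Prime := ⟨hq⟩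
  haveI : Fact (1 < q) := ⟨hq.one_lt⟩
  have hpq : (p : ZMod q) = 1 := by
    have h' : ((p % q : ℕ) : ZMod q) = ((1 : ℕ) : ZMod q) := by rw [hmod]
    rwa [ZMod.natCast_mod, Nat.cast_one] at h'
  have hg1 : g ≠ 1 := by
    intro h
    rw [h, orderOf_one] at hg
    exact hq.one_lt.ne' hg.symm
  have h1g : (1 : ZMod p) - g ≠ 0 := sub_ne_zero.mpr (Ne.symm hg1)
  have hEτ : ∀ (u : (ZMod p)ˣ) (j : ZMod p),
      Eequiv hφ u ((1 - g)⁻¹ * j) (SemidirectProduct.inr (Multiplicative.ofAdd (1 : ZMod q))) =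
        SemidirectProduct.inl (Multiplicative.ofAdd j) *
          SemidirectProduct.inr (Multiplicative.ofAdd (1 : ZMod q)) := by
    intro u j
    rw [Eequiv_tau hφ]
    congr 2
    have h2 : (1 - g)⁻¹ * j - g * ((1 - g)⁻¹ * j) = (1 - g) * ((1 - g)⁻¹ * j) := by ring
    rw [h2, ← mul_assoc, mul_inv_cancel₀ h1g, one_mul]
  refine ⟨?_, ?_, ?_⟩
  · intro f
    obtain ⟨i, j, hi, h1, h2⟩ := classify hφ hg hpq f
    exact ⟨i, j, hi, by rw [h1, inl_eq_pow], by rw [h2, inl_eq_pow]⟩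
  · intro i j hi
    refine ⟨Eequiv hφ (Units.mk0 i hi) ((1 - g)⁻¹ * j), ⟨?_, ?_⟩, ?_⟩
    · rw [Eequiv_sigma hφ, inl_eq_pow]
      norm_num
    · rw [hEτ (Units.mk0 i hi) j, inl_eq_pow]
    · rintro f ⟨ha, hb⟩
      refine equiv_ext ?_ ?_
      · rw [ha, Eequiv_sigma hφ, Units.val_mk0, inl_eq_pow i]
      · rw [hb, hEτ (Units.mk0 i hi) j, inl_eq_pow j]
  · set eFun : (ZMod p)ˣ × ZMod p →
        ((Multiplicative (ZMod p) ⋊[φ] Multiplicative (ZMod q)) ≃*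
          (Multiplicative (ZMod p) ⋊[φ] Multiplicative (ZMod q))) :=
      fun x => Eequiv hφ x.1 ((1 - g)⁻¹ * x.2) with heFun
    have hbij : Function.Bijective eFun := by
      constructor
      · intro a b h
        have h1 : SemidirectProduct.inl (Multiplicative.ofAdd ((a.1 : ZMod p))) =
            SemidirectProduct.inl (φ := φ) (Multiplicative.ofAdd ((b.1 : ZMod p))) := by
          rw [← Eequiv_sigma hφ a.1 ((1 - g)⁻¹ * a.2), ← Eequiv_sigma hφ b.1 ((1 - g)⁻¹ * b.2)]
          exact DFunLike.congr_fun h _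
        have h2 : SemidirectProduct.inl (Multiplicative.ofAdd a.2) *
              SemidirectProduct.inr (Multiplicative.ofAdd (1 : ZMod q)) =
            SemidirectProduct.inl (φ := φ) (Multiplicative.ofAdd b.2) *
              SemidirectProduct.inr (Multiplicative.ofAdd (1 : ZMod q)) := by
          rw [← hEτ a.1 a.2, ← hEτ b.1 b.2]
          exact DFunLike.congr_fun h _
        have ha1 : a.1 = b.1 :=
          Units.ext (Multiplicative.ofAdd.injective (SemidirectProduct.inl_injective h1))
        have ha2 : a.2 = b.2 :=
          Multiplicative.ofAdd.injective
            (SemidirectProduct.inl_injective (mul_right_cancel h2))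
        exact Prod.ext ha1 ha2
      · intro f
        obtain ⟨i, j, hi, h1, h2⟩ := classify hφ hg hpq f
        refine ⟨(Units.mk0 i hi, j), ?_⟩
        refine equiv_ext ?_ ?_
        · rw [h1]
          show Eequiv hφ (Units.mk0 i hi) _ _ = _
          rw [Eequiv_sigma hφ]
          norm_num
        · rw [h2]
          show Eequiv hφ (Units.mk0 i hi) _ _ = _
          rw [hEτ (Units.mk0 i hi) j]
    rw [← Nat.card_congr (Equiv.ofBijective eFun hbij)]
    rw [Nat.card_prod, Nat.card_eq_fintype_card, ZMod.card_units p, Nat.card_zmod, mul_comm]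
end

section
/- Let p > q be primes with p ≢ 1 (mod q). Then every skew brace of order pq is trivial; i.e., there is exactly one skew brace of order pq up to isomorphism, namely the trivial skew brace on ℤ_{pq} with a + b = a ∘ b. -/
abbrev IsGroupOp.toGroup {A : Type*} {op : A → A → A} {e : A} {inv : A → A}
    (h : IsGroupOp op e inv) : Group A :=
  letI : Mul A := ⟨op⟩
  letI : One A := ⟨e⟩
  letI : Inv A := ⟨inv⟩
  Group.ofLeftAxioms h.1 h.2.1 h.2.2.2.1

abbrev IsGroupOp.toAddGroup {A : Type*} {op : A → A → A} {e : A} {inv : A → A}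
    (h : IsGroupOp op e inv) : AddGroup A :=
  letI : Add A := ⟨op⟩
  letI : Zero A := ⟨e⟩
  letI : Neg A := ⟨inv⟩
  AddGroup.ofLeftAxioms h.1 h.2.1 h.2.2.2.1

theorem Nat.coprime_mul_totient_of_mod_ne_one {p q : ℕ} (hp : p.Prime) (hq : q.Prime)
    (hlt : q < p) (hmod : p % q ≠ 1) : (p * q).Coprime (Nat.totient (p * q)) := by
  have hq_not_dvd : ¬q ∣ p - 1 := fun hdvd =>
    hmod (Eq.trans (Nat.ModEq.symm ((Nat.modEq_iff_dvd' hp.one_le).2 hdvd))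
      (Nat.mod_eq_of_lt hq.one_lt))
  have := hp.two_le
  have := hq.two_le
  rw [Nat.totient_mul ((Nat.coprime_primes hp hq).2 hlt.ne'), Nat.totient_prime hp,
    Nat.totient_prime hq]
  refine Nat.Coprime.mul_left (Nat.Coprime.mul_right ?_ ?_) (Nat.Coprime.mul_right ?_ ?_)
  · exact hp.coprime_iff_not_dvd.2 (Nat.not_dvd_of_pos_of_lt (by omega) (by omega))
  · exact hp.coprime_iff_not_dvd.2 (Nat.not_dvd_of_pos_of_lt (by omega) (by omega))
  · exact hq.coprime_iff_not_dvd.2 hq_not_dvd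
  · exact hq.coprime_iff_not_dvd.2 (Nat.not_dvd_of_pos_of_lt (by omega) (by omega))

theorem MonoidHom.eq_one_of_coprime_card {G H : Type*} [Group G] [Group H] (f : G →* H)
    (h : (Nat.card G).Coprime (Nat.card H)) : f = 1 :=
  ext fun a => orderOf_eq_one_iff.mp <| Nat.eq_one_of_dvd_coprimes h
    ((orderOf_map_dvd f a).trans (orderOf_dvd_natCard a)) (orderOf_dvd_natCard (f a))

theorem IsAddCyclic.card_addAut (A : Type*) [AddGroup A] [Finite A] [IsAddCyclic A] :
    Nat.card (AddAut A) = Nat.totient (Nat.card A) :=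
  (Nat.card_congr (MulAutMultiplicative A).toEquiv).symm.trans
    (IsCyclic.card_mulAut (Multiplicative A))

section OrderPrimeMulPrime

variable {G : Type*} [Group G] [Finite G] {r s : ℕ} [Fact r.Prime]

theorem Sylow.card_eq_of_card_eq_mul (hs : s.Prime) (hrs : r ≠ s) (hG : Nat.card G = r * s)
    (P : Sylow r G) : Nat.card P = r := by
  rw [P.card_eq_multiplicity, hG, Nat.factorization_mul (Fact.out : r.Prime).ne_zero hs.ne_zero]
  simp [(Fact.out : r.Prime).factorization, hs.factorization, hrs.symm]

theorem Sylow.normal_of_card_eq_mul (hs : s.Prime) (hrs : r ≠ s) (hmod : s % r ≠ 1)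
    (hG : Nat.card G = r * s) (P : Sylow r G) : (P : Subgroup G).Normal := by
  have hr : r.Prime := Fact.out
  have hindex : (P : Subgroup G).index = s := by
    have := (P : Subgroup G).card_mul_index
    rw [P.card_eq_of_card_eq_mul hs hrs hG, hG] at this
    exact Nat.eq_of_mul_eq_mul_left hr.pos this
  have hcard : Nat.card (Sylow r G) = 1 := by
    rcases (Nat.dvd_prime hs).mp (hindex ▸ P.card_dvd_index) with h | h
    · exact h
    · have hmodEq : s % r = 1 % r := h ▸ card_sylow_modEq_one r G
      exact absurd (hmodEq.trans (Nat.mod_eq_of_lt hr.one_lt)) hmod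
  have := (Nat.card_eq_one_iff_unique.mp hcard).1
  exact P.normal_of_subsingleton

end OrderPrimeMulPrime

theorem isCyclic_of_card_eq_prime_mul_prime {G : Type*} [Group G] {p q : ℕ} (hp : p.Prime)
    (hq : q.Prime) (hlt : q < p) (hmod : p % q ≠ 1) (hG : Nat.card G = p * q) : IsCyclic G := by
  have : Fact p.Prime := ⟨hp⟩
  have : Fact q.Prime := ⟨hq⟩
  have : Finite G := Nat.finite_of_card_ne_zero (hG ▸ Nat.mul_ne_zero hp.ne_zero hq.ne_zero)
  have hpq : p ≠ q := hlt.ne'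
  obtain ⟨P⟩ : Nonempty (Sylow p G) := inferInstance
  obtain ⟨Q⟩ : Nonempty (Sylow q G) := inferInstance
  have hPcard := P.card_eq_of_card_eq_mul hq hpq hG
  have hQcard := Q.card_eq_of_card_eq_mul hp hpq.symm (hG.trans (mul_comm p q))
  have hPnormal := P.normal_of_card_eq_mul hq hpq
    (by rw [Nat.mod_eq_of_lt hlt]; exact hq.one_lt.ne') hG
  have hQnormal := Q.normal_of_card_eq_mul hp hpq.symm hmod (hG.trans (mul_comm p q))
  obtain ⟨x, hx⟩ := exists_prime_orderOf_dvd_card' (G := P) p (dvd_of_eq hPcard.symm)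
  obtain ⟨y, hy⟩ := exists_prime_orderOf_dvd_card' (G := Q) q (dvd_of_eq hQcard.symm)
  have hxy : Commute (x : G) y := Subgroup.commute_of_normal_of_disjoint _ _ hPnormal hQnormal
    (IsPGroup.disjoint_of_ne p q hpq _ _ P.isPGroup' Q.isPGroup') x y x.2 y.2
  refine isCyclic_of_orderOf_eq_card ((x : G) * y) ?_
  rw [hxy.orderOf_mul_eq_mul_orderOf_of_coprime, Subgroup.orderOf_coe, Subgroup.orderOf_coe,
    hx, hy, hG]
  rwa [Subgroup.orderOf_coe, Subgroup.orderOf_coe, hx, hy, Nat.coprime_primes hp hq]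

section SkewBrace

variable {A : Type*} [AddGroup A] [Group A]

def braceLambda (hbrace : ∀ a b c : A, a * (b + c) = a * b + -a + a * c) (a : A) : A →+ A :=
  AddMonoidHom.mk' (fun b => -a + a * b) fun b c => by simp only [hbrace, add_assoc]

theorem braceLambda_apply (hbrace : ∀ a b c : A, a * (b + c) = a * b + -a + a * c) (a b : A) :
    braceLambda hbrace a b = -a + a * b :=
  rfl

theorem brace_mul_zero (hbrace : ∀ a b c : A, a * (b + c) = a * b + -a + a * c) (a : A) :
    a * 0 = a :=
  (neg_add_eq_zero.mp (map_zero (braceLambda hbrace a))).symm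

theorem brace_one_eq_zero (hbrace : ∀ a b c : A, a * (b + c) = a * b + -a + a * c) :
    (1 : A) = 0 :=
  ((one_mul (0 : A)).symm.trans (brace_mul_zero hbrace 1)).symm

theorem braceLambda_one (hbrace : ∀ a b c : A, a * (b + c) = a * b + -a + a * c) :
    braceLambda hbrace 1 = AddMonoidHom.id A := by
  ext b
  rw [braceLambda_apply, one_mul, brace_one_eq_zero hbrace, neg_zero, zero_add,
    AddMonoidHom.id_apply]

theorem braceLambda_mul (hbrace : ∀ a b c : A, a * (b + c) = a * b + -a + a * c) (a b : A) :
    braceLambda hbrace (a * b) = (braceLambda hbrace a).comp (braceLambda hbrace b) := by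
  ext c
  rw [AddMonoidHom.comp_apply, braceLambda_apply hbrace b, map_add, map_neg, braceLambda_apply,
    braceLambda_apply, braceLambda_apply, mul_assoc, neg_add_rev, neg_neg, add_assoc,
    add_neg_cancel_left]

def braceLambdaAut (hbrace : ∀ a b c : A, a * (b + c) = a * b + -a + a * c) :
    A →* Multiplicative (AddAut A) :=
  MonoidHom.mk'
    (fun a => .ofAdd <| (braceLambda hbrace a).toAddEquiv (braceLambda hbrace a⁻¹)
      (by rw [← braceLambda_mul, inv_mul_cancel, braceLambda_one])
      (by rw [← braceLambda_mul, mul_inv_cancel, braceLambda_one]))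
    fun a b => by ext c; simp [braceLambda_mul]

theorem brace_mul_eq_add (hbrace : ∀ a b c : A, a * (b + c) = a * b + -a + a * c)
    (hcop : (Nat.card A).Coprime (Nat.card (AddAut A))) (a b : A) : a * b = a + b := by
  have htriv : braceLambdaAut hbrace a = 1 := by
    rw [(braceLambdaAut hbrace).eq_one_of_coprime_card hcop, MonoidHom.one_apply]
  have hfix : braceLambda hbrace a b = b :=
    DFunLike.congr_fun (congrArg Multiplicative.toAdd htriv) b
  rwa [braceLambda_apply, neg_add_eq_iff_eq_add] at hfix

end SkewBrace

/-- Let `p > q` be primes with `p ≢ 1 (mod q)`.  Then every skew brace of order `pq` is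
trivial (the two operations coincide) and its group is cyclic of order `pq`: up to
isomorphism there is exactly one skew brace of order `pq`, the trivial one on `ℤ_{pq}`. -/
theorem stmt11 (p q : ℕ) (hp : p.Prime) (hq : q.Prime) (hlt : q < p)
    (hmod : p % q ≠ 1)
    {A : Type*} (add : A → A → A) (zero : A) (neg : A → A)
    (mul : A → A → A) (one : A) (inv : A → A)
    (h : IsSkewBrace add zero neg mul one inv)
    (hcard : Nat.card A = p * q) :
    (∀ a b : A, mul a b = add a b) ∧
    (∃ e : A ≃ ZMod (p * q), ∀ a b : A, e (add a b) = e a + e b) := by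
  obtain ⟨hadd, hmul, hbrace⟩ := h
  let := hadd.toAddGroup
  let := hmul.toGroup
  have : Finite A := Nat.finite_of_card_ne_zero (hcard ▸ Nat.mul_ne_zero hp.ne_zero hq.ne_zero)
  have : IsAddCyclic A := isCyclic_multiplicative_iff.mp <|
    isCyclic_of_card_eq_prime_mul_prime (G := Multiplicative A) hp hq hlt hmod hcard
  have hcop : (Nat.card A).Coprime (Nat.card (AddAut A)) := by
    rw [IsAddCyclic.card_addAut, hcard]
    exact Nat.coprime_mul_totient_of_mod_ne_one hp hq hlt hmod
  let e := (zmodAddCyclicAddEquiv this).symm.trans (ZMod.ringEquivCongr hcard).toAddEquiv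
  exact ⟨brace_mul_eq_add hbrace hcop, e.toEquiv, e.map_add⟩
end

section
/- Let p > q be primes with p ≡ 1 (mod q), let C = ℤ_p × ℤ_q be the cyclic group of order pq, and let α ∈ Aut(C) be defined by α(σ) = σ^g, α(τ) = τ, where g has multiplicative order q mod p. Then the regular subgroups of Hol(C) whose image under π₂ has size q are exactly the groups G_b = ⟨σ, τ^b α⟩ for 1 ≤ b ≤ q-1, and each G_b is isomorphic to the non-abelian group ℤ_p ⋊_g ℤ_q. -/
open Equiv

/-- The holomorph `Hol(A) = A ⋊ Aut(A)` of an additive group `A`, viewed as the set of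
permutations of `A` of the form `x ↦ a + f(x)` with `f` an automorphism. -/
def AddHolSet (A : Type*) [AddGroup A] : Set (Equiv.Perm A) :=
  {g | ∃ (a : A) (f : A ≃+ A), ∀ x, g x = a + f x}

/-- The projection `π₂ : Hol(A) → Aut(A)`, recovering the automorphism part of an
element of the holomorph. -/
def addPi2 {A : Type*} [AddGroup A] (g : Equiv.Perm A) : A → A :=
  fun x => -(g 0) + g x

/-- A subgroup of permutations of `A` is regular if its action is simply transitive. -/
def IsRegularPermGroup {A : Type*} (G : Subgroup (Equiv.Perm A)) : Prop :=
  ∀ x y : A, ∃! g : Equiv.Perm A, g ∈ G ∧ g x = y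


namespace St12

variable {p q : ℕ}

lemma addLeft_mul {A : Type*} [AddGroup A] (c d : A) :
    Equiv.addLeft c * Equiv.addLeft d = Equiv.addLeft (c + d) := by
  ext x; simp [Equiv.Perm.mul_apply, add_assoc]

lemma addLeft_pow {A : Type*} [AddGroup A] (c : A) (k : ℕ) :
    Equiv.addLeft c ^ k = Equiv.addLeft (k • c) := by
  induction k with
  | zero => ext x; simp
  | succ n ih => rw [pow_succ, ih, addLeft_mul, ← succ_nsmul]

variable (g : (ZMod p)ˣ)

/-- abbreviation for α -/
def alphaP (q : ℕ) (g : (ZMod p)ˣ) : Equiv.Perm (ZMod p × ZMod q) :=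
  Equiv.prodCongr (Units.mulLeft g) (Equiv.refl (ZMod q))

lemma alphaP_apply (x : ZMod p × ZMod q) : alphaP q g x = ((g : ZMod p) * x.1, x.2) := rfl

lemma alphaP_pow_apply (k : ℕ) (x : ZMod p × ZMod q) :
    (alphaP q g ^ k) x = ((g : ZMod p) ^ k * x.1, x.2) := by
  induction k generalizing x with
  | zero => simp
  | succ n ih =>
      rw [pow_succ, Equiv.Perm.mul_apply, alphaP_apply, ih]
      rw [pow_succ]; ring_nf

/-- the standard holomorph element -/
def holE (a : ZMod p × ZMod q) (k : ℕ) : Equiv.Perm (ZMod p × ZMod q) :=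
  Equiv.addLeft a * alphaP q g ^ k

lemma holE_apply (a : ZMod p × ZMod q) (k : ℕ) (x : ZMod p × ZMod q) :
    holE g a k x = (a.1 + (g : ZMod p) ^ k * x.1, a.2 + x.2) := by
  simp [holE, Equiv.Perm.mul_apply, alphaP_pow_apply, Prod.ext_iff]

end St12

namespace St12

variable {p q : ℕ}

lemma gpow_val_mod [NeZero q] {g : (ZMod p)ˣ} (hg1 : (g : ZMod p) ^ q = 1) (a : ℕ) :
    (g : ZMod p) ^ (a % q) = (g : ZMod p) ^ a := by
  conv_rhs => rw [← Nat.div_add_mod a q]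
  rw [pow_add, pow_mul, hg1, one_pow, one_mul]

lemma gpow_val_add [NeZero q] {g : (ZMod p)ˣ} (hg1 : (g : ZMod p) ^ q = 1) (m₁ m₂ : ZMod q) :
    (g : ZMod p) ^ (m₁ + m₂).val = (g : ZMod p) ^ m₁.val * (g : ZMod p) ^ m₂.val := by
  rw [ZMod.val_add, gpow_val_mod hg1, pow_add]

lemma gpow_val_inj [NeZero q] {g : (ZMod p)ˣ} (hgo : orderOf g = q) {m₁ m₂ : ZMod q}
    (h : (g : ZMod p) ^ m₁.val = (g : ZMod p) ^ m₂.val) : m₁ = m₂ := by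
  have hu : g ^ m₁.val = g ^ m₂.val := Units.ext (by simpa using h)
  have := pow_injOn_Iio_orderOf (x := g) (by rw [hgo]; exact ZMod.val_lt m₁)
    (by rw [hgo]; exact ZMod.val_lt m₂) hu
  exact ZMod.val_injective q this

end St12

namespace St12

variable {p q : ℕ} [NeZero q] {g : (ZMod p)ˣ}
variable {φ : Multiplicative (ZMod q) →* MulAut (Multiplicative (ZMod p))}

/-- The homomorphism `ℤ_p ⋊ ℤ_q →* Perm (ℤ_p × ℤ_q)`, `(n, m) ↦ addLeft (n, m·B) ∘ α^(val m)`. -/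
def psi (g : (ZMod p)ˣ) (hg1 : (g : ZMod p) ^ q = 1)
    (hφ : ∀ (m : ZMod q) (n : ZMod p),
      φ (Multiplicative.ofAdd m) (Multiplicative.ofAdd n) =
        Multiplicative.ofAdd ((g : ZMod p) ^ m.val * n))
    (B : ZMod q) :
    (Multiplicative (ZMod p) ⋊[φ] Multiplicative (ZMod q)) →* Equiv.Perm (ZMod p × ZMod q) where
  toFun z := holE g (z.left.toAdd, z.right.toAdd * B) z.right.toAdd.val
  map_one' := by
    refine Equiv.ext fun x => ?_
    show holE g ((1 : Multiplicative (ZMod p) ⋊[φ] Multiplicative (ZMod q)).left.toAdd,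
      (1 : Multiplicative (ZMod p) ⋊[φ] Multiplicative (ZMod q)).right.toAdd * B)
      (1 : Multiplicative (ZMod p) ⋊[φ] Multiplicative (ZMod q)).right.toAdd.val x = x
    simp [holE_apply, SemidirectProduct.one_left, SemidirectProduct.one_right,
      Equiv.Perm.one_apply]
  map_mul' z₁ z₂ := by
    refine Equiv.ext fun x => ?_
    have hl : (z₁ * z₂).left = z₁.left * φ z₁.right z₂.left := rfl
    have hr : (z₁ * z₂).right = z₁.right * z₂.right := rfl
    have hphi : (φ z₁.right z₂.left).toAdd
        = (g : ZMod p) ^ z₁.right.toAdd.val * z₂.left.toAdd := by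
      have := hφ z₁.right.toAdd z₂.left.toAdd
      simp only [ofAdd_toAdd] at this
      rw [this, toAdd_ofAdd]
    rw [Equiv.Perm.mul_apply]
    rw [show ∀ w : Multiplicative (ZMod p) ⋊[φ] Multiplicative (ZMod q), ∀ y,
      (fun z => holE g (z.left.toAdd, z.right.toAdd * B) z.right.toAdd.val) w y
        = holE g (w.left.toAdd, w.right.toAdd * B) w.right.toAdd.val y from fun _ _ => rfl]
    simp only [hl, hr, holE_apply, toAdd_mul, hphi]
    refine Prod.ext ?_ ?_ <;> simp only []
    · rw [gpow_val_add hg1]; ring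
    · ring

variable [NeZero p]

lemma psi_apply (hg1 : (g : ZMod p) ^ q = 1)
    (hφ : ∀ (m : ZMod q) (n : ZMod p),
      φ (Multiplicative.ofAdd m) (Multiplicative.ofAdd n) =
        Multiplicative.ofAdd ((g : ZMod p) ^ m.val * n))
    (B : ZMod q) (z) (x : ZMod p × ZMod q) :
    psi g hg1 hφ B z x = (z.left.toAdd + (g : ZMod p) ^ z.right.toAdd.val * x.1,
      z.right.toAdd * B + x.2) := by
  show holE g (z.left.toAdd, z.right.toAdd * B) z.right.toAdd.val x = _
  rw [holE_apply]

lemma psi_injective (hgo : orderOf g = q) (hg1 : (g : ZMod p) ^ q = 1)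
    (hφ : ∀ (m : ZMod q) (n : ZMod p),
      φ (Multiplicative.ofAdd m) (Multiplicative.ofAdd n) =
        Multiplicative.ofAdd ((g : ZMod p) ^ m.val * n))
    (B : ZMod q) : Function.Injective (psi g hg1 hφ B) := by
  intro z₁ z₂ h
  have h0 := congrArg (fun e : Equiv.Perm (ZMod p × ZMod q) => e (0, 0)) h
  have h1 := congrArg (fun e : Equiv.Perm (ZMod p × ZMod q) => e (1, 0)) h
  simp only [psi_apply, Prod.mk.injEq, mul_zero, add_zero, mul_one] at h0 h1
  have hm : z₁.right = z₂.right := gpow_val_inj hgo (by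
    have := h1.1
    rw [h0.1] at this
    exact add_left_cancel this)
  ext
  · exact h0.1
  · exact congrArg Multiplicative.toAdd hm

open SemidirectProduct in
lemma psi_range_eq (hq1 : 1 < q) (hg1 : (g : ZMod p) ^ q = 1)
    (hφ : ∀ (m : ZMod q) (n : ZMod p),
      φ (Multiplicative.ofAdd m) (Multiplicative.ofAdd n) =
        Multiplicative.ofAdd ((g : ZMod p) ^ m.val * n))
    (b : ℕ) :
    (psi g hg1 hφ (b : ZMod q)).range = Subgroup.closure
      {Equiv.addLeft ((1, 0) : ZMod p × ZMod q),
        (Equiv.addLeft ((0, 1) : ZMod p × ZMod q)) ^ b * alphaP q g} := by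
  have hinl : psi g hg1 hφ (b : ZMod q) (inl (Multiplicative.ofAdd (1 : ZMod p)))
      = Equiv.addLeft ((1, 0) : ZMod p × ZMod q) := by
    refine Equiv.ext fun x => ?_
    rw [psi_apply]
    simp [Prod.ext_iff]
  have hinr : psi g hg1 hφ (b : ZMod q) (inr (Multiplicative.ofAdd (1 : ZMod q)))
      = (Equiv.addLeft ((0, 1) : ZMod p × ZMod q)) ^ b * alphaP q g := by
    refine Equiv.ext fun x => ?_
    rw [psi_apply, addLeft_pow, Equiv.Perm.mul_apply, alphaP_apply]
    simp only [left_inr, right_inr, toAdd_ofAdd, toAdd_one, ZMod.val_one'' hq1.ne',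
      pow_one, Equiv.coe_addLeft, Prod.ext_iff, Prod.smul_mk, Prod.fst_add, Prod.snd_add]
    constructor
    · simp
    · simp [nsmul_eq_mul]
  apply le_antisymm
  · rintro - ⟨z, rfl⟩
    rw [← inl_left_mul_inr_right z, map_mul]
    have hl : inl z.left = (inl (Multiplicative.ofAdd (1 : ZMod p)) :
        Multiplicative (ZMod p) ⋊[φ] Multiplicative (ZMod q)) ^ z.left.toAdd.val := by
      rw [← map_pow, ← ofAdd_nsmul]
      simp [nsmul_eq_mul, ZMod.natCast_zmod_val]
    have hr : inr z.right = (inr (Multiplicative.ofAdd (1 : ZMod q)) :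
        Multiplicative (ZMod p) ⋊[φ] Multiplicative (ZMod q)) ^ z.right.toAdd.val := by
      rw [← map_pow, ← ofAdd_nsmul]
      simp [nsmul_eq_mul, ZMod.natCast_zmod_val]
    apply mul_mem
    · rw [hl, map_pow, hinl]
      exact pow_mem (Subgroup.subset_closure (by simp)) _
    · rw [hr, map_pow, hinr]
      exact pow_mem (Subgroup.subset_closure (by simp)) _
  · rw [Subgroup.closure_le]
    rintro x (rfl | rfl)
    · exact ⟨inl (Multiplicative.ofAdd (1 : ZMod p)), hinl⟩
    · exact ⟨inr (Multiplicative.ofAdd (1 : ZMod q)), hinr⟩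

lemma card_sdp :
    Nat.card (Multiplicative (ZMod p) ⋊[φ] Multiplicative (ZMod q)) = p * q := by
  have e : (Multiplicative (ZMod p) ⋊[φ] Multiplicative (ZMod q)) ≃
      (Multiplicative (ZMod p)) × (Multiplicative (ZMod q)) :=
    ⟨fun z => (z.left, z.right), fun x => ⟨x.1, x.2⟩, fun z => by ext <;> rfl,
      fun x => rfl⟩
  rw [Nat.card_congr e, Nat.card_prod]
  simp [Nat.card_zmod]

lemma card_closure (hq1 : 1 < q) (hgo : orderOf g = q) (hg1 : (g : ZMod p) ^ q = 1)
    (hφ : ∀ (m : ZMod q) (n : ZMod p),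
      φ (Multiplicative.ofAdd m) (Multiplicative.ofAdd n) =
        Multiplicative.ofAdd ((g : ZMod p) ^ m.val * n))
    (b : ℕ) :
    Nat.card (Subgroup.closure
      {Equiv.addLeft ((1, 0) : ZMod p × ZMod q),
        (Equiv.addLeft ((0, 1) : ZMod p × ZMod q)) ^ b * alphaP q g}) = p * q := by
  rw [← psi_range_eq hq1 hg1 hφ b,
    Nat.card_congr (MonoidHom.ofInjective (psi_injective hgo hg1 hφ (b : ZMod q))).symm.toEquiv,
    card_sdp]

/-- The isomorphism for part 2. -/
noncomputable def closureIso (hq1 : 1 < q) (hgo : orderOf g = q) (hg1 : (g : ZMod p) ^ q = 1)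
    (hφ : ∀ (m : ZMod q) (n : ZMod p),
      φ (Multiplicative.ofAdd m) (Multiplicative.ofAdd n) =
        Multiplicative.ofAdd ((g : ZMod p) ^ m.val * n))
    (b : ℕ) :
    (Subgroup.closure
      {Equiv.addLeft ((1, 0) : ZMod p × ZMod q),
        (Equiv.addLeft ((0, 1) : ZMod p × ZMod q)) ^ b * alphaP q g}) ≃*
      (Multiplicative (ZMod p) ⋊[φ] Multiplicative (ZMod q)) :=
  ((MulEquiv.subgroupCongr (psi_range_eq hq1 hg1 hφ b).symm).trans
    (MonoidHom.ofInjective (psi_injective hgo hg1 hφ (b : ZMod q))).symm)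

/-- multiplication by a unit as an additive equivalence -/
def mulUnitAddEquiv (u : (ZMod p)ˣ) : ZMod p ≃+ ZMod p :=
  { Units.mulLeft u with map_add' := fun a b => mul_add (u : ZMod p) a b }

lemma psi_mem_hol (hg1 : (g : ZMod p) ^ q = 1)
    (hφ : ∀ (m : ZMod q) (n : ZMod p),
      φ (Multiplicative.ofAdd m) (Multiplicative.ofAdd n) =
        Multiplicative.ofAdd ((g : ZMod p) ^ m.val * n))
    (B : ZMod q) (z) :
    psi g hg1 hφ B z ∈ AddHolSet (ZMod p × ZMod q) := by
  refine ⟨(z.left.toAdd, z.right.toAdd * B),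
    AddEquiv.prodCongr (mulUnitAddEquiv (g ^ z.right.toAdd.val)) (AddEquiv.refl (ZMod q)),
    fun x => ?_⟩
  rw [psi_apply]
  show _ = (_ + (((g ^ z.right.toAdd.val : (ZMod p)ˣ) : ZMod p) * x.1), _ + x.2)
  rw [Units.val_pow_eq_pow_val]

variable [Fact q.Prime]

lemma psi_regular (hgo : orderOf g = q) (hg1 : (g : ZMod p) ^ q = 1)
    (hφ : ∀ (m : ZMod q) (n : ZMod p),
      φ (Multiplicative.ofAdd m) (Multiplicative.ofAdd n) =
        Multiplicative.ofAdd ((g : ZMod p) ^ m.val * n))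
    {B : ZMod q} (hB : B ≠ 0) :
    IsRegularPermGroup (psi g hg1 hφ B).range := by
  intro x y
  set m : ZMod q := (y.2 - x.2) * B⁻¹ with hm
  have hmB : m * B = y.2 - x.2 := by
    rw [hm, mul_assoc, inv_mul_cancel₀ hB, mul_one]
  set n : ZMod p := y.1 - (g : ZMod p) ^ m.val * x.1 with hn
  refine ⟨psi g hg1 hφ B ⟨Multiplicative.ofAdd n, Multiplicative.ofAdd m⟩,
    ⟨⟨_, rfl⟩, ?_⟩, ?_⟩
  · rw [psi_apply]
    show (n + (g : ZMod p) ^ m.val * x.1, m * B + x.2) = y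
    refine Prod.ext ?_ ?_
    · rw [hn]; ring
    · rw [hmB]; ring
  · rintro h' ⟨⟨z', rfl⟩, hx⟩
    rw [psi_apply] at hx
    have h2 : z'.right.toAdd * B + x.2 = y.2 := congrArg Prod.snd hx
    have hmr : z'.right.toAdd = m := by
      have h3 : z'.right.toAdd * B = m * B := by rw [hmB]; linear_combination h2
      exact mul_right_cancel₀ hB h3
    have h1 : z'.left.toAdd = n := by
      have h4 := congrArg Prod.fst hx
      simp only at h4
      rw [hmr] at h4
      rw [hn]; linear_combination h4
    congr 1
    refine SemidirectProduct.ext ?_ ?_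
    · exact Multiplicative.toAdd.injective (by simpa using h1)
    · exact Multiplicative.toAdd.injective (by simpa using hmr)

lemma addPi2_psi (hg1 : (g : ZMod p) ^ q = 1)
    (hφ : ∀ (m : ZMod q) (n : ZMod p),
      φ (Multiplicative.ofAdd m) (Multiplicative.ofAdd n) =
        Multiplicative.ofAdd ((g : ZMod p) ^ m.val * n))
    (B : ZMod q) (z) :
    addPi2 (psi g hg1 hφ B z)
      = fun x : ZMod p × ZMod q => ((g : ZMod p) ^ z.right.toAdd.val * x.1, x.2) := by
  funext x
  show -(psi g hg1 hφ B z 0) + psi g hg1 hφ B z x = _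
  rw [psi_apply, psi_apply]
  refine Prod.ext ?_ ?_ <;> simp

lemma card_addPi2_image (hgo : orderOf g = q) (hg1 : (g : ZMod p) ^ q = 1)
    (hφ : ∀ (m : ZMod q) (n : ZMod p),
      φ (Multiplicative.ofAdd m) (Multiplicative.ofAdd n) =
        Multiplicative.ofAdd ((g : ZMod p) ^ m.val * n))
    (B : ZMod q) :
    Nat.card (addPi2 '' ((psi g hg1 hφ B).range : Set (Equiv.Perm (ZMod p × ZMod q)))) = q := by
  have himg : addPi2 '' ((psi g hg1 hφ B).range : Set (Equiv.Perm (ZMod p × ZMod q)))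
      = Set.range (fun m : ZMod q =>
          (fun x : ZMod p × ZMod q => ((g : ZMod p) ^ m.val * x.1, x.2))) := by
    ext f
    constructor
    · rintro ⟨-, ⟨z, rfl⟩, rfl⟩
      exact ⟨z.right.toAdd, (addPi2_psi hg1 hφ B z).symm⟩
    · rintro ⟨m, rfl⟩
      refine ⟨psi g hg1 hφ B (SemidirectProduct.inr (Multiplicative.ofAdd m)), ⟨_, rfl⟩, ?_⟩
      rw [addPi2_psi]
      simp
  rw [himg, Nat.card_range_of_injective, Nat.card_zmod]
  intro m₁ m₂ h
  have := congrArg (fun f : ZMod p × ZMod q → ZMod p × ZMod q => (f (1, 0)).1) h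
  simp only [mul_one] at this
  exact gpow_val_inj hgo this

lemma pcast_one (hq : q.Prime) (hmod : p % q = 1) : (p : ZMod q) = 1 := by
  rw [← ZMod.natCast_mod, hmod, Nat.cast_one]

lemma qcast_ne (hp : p.Prime) (hq : q.Prime) (hlt : q < p) : (q : ZMod p) ≠ 0 := by
  rw [Ne, ZMod.natCast_eq_zero_iff]
  intro hdvd
  exact absurd (Nat.le_of_dvd hq.pos hdvd) (not_le.mpr hlt)

lemma addEquiv_diag (hp : p.Prime) (hq : q.Prime) (hlt : q < p) (hmod : p % q = 1)
    (f : (ZMod p × ZMod q) ≃+ (ZMod p × ZMod q)) :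
    (∀ x, f x = ((f (1, 0)).1 * x.1, (f (0, 1)).2 * x.2)) ∧
      (f (1, 0)).1 ≠ 0 ∧ (f (0, 1)).2 ≠ 0 := by
  haveI : Fact p.Prime := ⟨hp⟩
  haveI : Fact q.Prime := ⟨hq⟩
  have hzp : p • ((1 : ZMod p), (0 : ZMod q)) = 0 := by
    refine Prod.ext ?_ ?_ <;> simp [nsmul_eq_mul, ZMod.natCast_self]
  have hzq : q • ((0 : ZMod p), (1 : ZMod q)) = 0 := by
    refine Prod.ext ?_ ?_ <;> simp [nsmul_eq_mul, ZMod.natCast_self]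
  have h10 : (f (1, 0)).2 = 0 := by
    have h1 : p • f (1, 0) = 0 := by rw [← map_nsmul, hzp, map_zero]
    have h2 : (p : ZMod q) * (f (1, 0)).2 = 0 := by
      have := congrArg Prod.snd h1
      simpa [nsmul_eq_mul] using this
    rwa [pcast_one hq hmod, one_mul] at h2
  have h01 : (f (0, 1)).1 = 0 := by
    have h1 : q • f (0, 1) = 0 := by rw [← map_nsmul, hzq, map_zero]
    have h2 : (q : ZMod p) * (f (0, 1)).1 = 0 := by
      have := congrArg Prod.fst h1
      simpa [nsmul_eq_mul] using this
    rcases mul_eq_zero.mp h2 with h | h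
    · exact absurd h (qcast_ne hp hq hlt)
    · exact h
  have hdiag : ∀ x : ZMod p × ZMod q, f x = ((f (1, 0)).1 * x.1, (f (0, 1)).2 * x.2) := by
    intro x
    have hx : x = x.1.val • ((1 : ZMod p), (0 : ZMod q)) + x.2.val • ((0 : ZMod p), (1 : ZMod q)) := by
      refine Prod.ext ?_ ?_ <;> simp [nsmul_eq_mul, ZMod.natCast_zmod_val]
    rw [hx, map_add, map_nsmul, map_nsmul]
    refine Prod.ext ?_ ?_
    · simp [nsmul_eq_mul, h01, ZMod.natCast_zmod_val, mul_comm]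
    · simp [nsmul_eq_mul, h10, ZMod.natCast_zmod_val, mul_comm]
  refine ⟨hdiag, ?_, ?_⟩
  · intro h0
    have : f (1, 0) = f 0 := by rw [map_zero]; exact Prod.ext (by simpa using h0) h10
    have := f.injective this
    exact one_ne_zero (congrArg Prod.fst this)
  · intro h0
    have : f (0, 1) = f 0 := by rw [map_zero]; exact Prod.ext h01 (by simpa using h0)
    have := f.injective this
    exact one_ne_zero (congrArg Prod.snd this)

lemma hol_pi2 {A : Type*} [AddGroup A] {h : Equiv.Perm A} (hh : h ∈ AddHolSet A) :
    ∃ f : A ≃+ A, addPi2 h = ⇑f ∧ ∀ x, h x = h 0 + f x := by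
  obtain ⟨a, f, hf⟩ := hh
  have h0 : h 0 = a := by rw [hf 0, map_zero, add_zero]
  refine ⟨f, funext fun x => ?_, fun x => by rw [h0, hf]⟩
  show -(h 0) + h x = f x
  rw [h0, hf x, neg_add_cancel_left]

lemma addPi2_one {A : Type*} [AddGroup A] : addPi2 (1 : Equiv.Perm A) = id := by
  funext x
  show -((1 : Equiv.Perm A) 0) + (1 : Equiv.Perm A) x = x
  simp [Equiv.Perm.one_apply]

lemma addPi2_mul {A : Type*} [AddCommGroup A] {h : Equiv.Perm A} (hh : h ∈ AddHolSet A)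
    (k : Equiv.Perm A) : addPi2 (h * k) = addPi2 h ∘ addPi2 k := by
  obtain ⟨f, hf, hfx⟩ := hol_pi2 hh
  funext x
  show -(h (k 0)) + h (k x) = addPi2 h (addPi2 k x)
  rw [hf, hfx (k 0), hfx (k x)]
  show _ = f (-(k 0) + k x)
  rw [map_add, map_neg]
  abel

/-- the multiplicative "diagonal part" homomorphism on a subgroup of the holomorph -/
def theta0 (hp : p.Prime) (hq : q.Prime) (hlt : q < p) (hmod : p % q = 1)
    {G : Subgroup (Equiv.Perm (ZMod p × ZMod q))}
    (hsub : (G : Set (Equiv.Perm (ZMod p × ZMod q))) ⊆ AddHolSet (ZMod p × ZMod q)) :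
    G →* ZMod p × ZMod q where
  toFun h := ((addPi2 h.1 (1, 0)).1, (addPi2 h.1 (0, 1)).2)
  map_one' := by
    show ((addPi2 ((1 : G) : Equiv.Perm (ZMod p × ZMod q)) (1, 0)).1,
      (addPi2 ((1 : G) : Equiv.Perm (ZMod p × ZMod q)) (0, 1)).2) = (1, 1)
    rw [show ((1 : G) : Equiv.Perm (ZMod p × ZMod q)) = 1 from rfl, addPi2_one]
    rfl
  map_mul' h k := by
    obtain ⟨fh, hfh, -⟩ := hol_pi2 (hsub h.2)
    have hdh := (addEquiv_diag hp hq hlt hmod fh).1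
    have hmul : addPi2 (h.1 * k.1) = addPi2 h.1 ∘ addPi2 k.1 := addPi2_mul (hsub h.2) k.1
    show ((addPi2 (h.1 * k.1) (1, 0)).1, (addPi2 (h.1 * k.1) (0, 1)).2) = _
    rw [hmul]
    show ((addPi2 h.1 (addPi2 k.1 (1, 0))).1, (addPi2 h.1 (addPi2 k.1 (0, 1))).2) = _
    rw [hfh, hdh (addPi2 k.1 (1, 0)), hdh (addPi2 k.1 (0, 1)), ← hfh]
    rfl

lemma forward (hp : p.Prime) (hq : q.Prime) (hlt : q < p) (hmod : p % q = 1)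
    (hg : orderOf g = q) (hg1 : (g : ZMod p) ^ q = 1)
    (hφ : ∀ (m : ZMod q) (n : ZMod p),
      φ (Multiplicative.ofAdd m) (Multiplicative.ofAdd n) =
        Multiplicative.ofAdd ((g : ZMod p) ^ m.val * n))
    {G : Subgroup (Equiv.Perm (ZMod p × ZMod q))}
    (hsub : (G : Set (Equiv.Perm (ZMod p × ZMod q))) ⊆ AddHolSet (ZMod p × ZMod q))
    (hreg : IsRegularPermGroup G)
    (hcard : Nat.card (addPi2 '' (G : Set (Equiv.Perm (ZMod p × ZMod q)))) = q) :
    ∃ b : ℕ, 1 ≤ b ∧ b ≤ q - 1 ∧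
      G = Subgroup.closure
        {Equiv.addLeft ((1, 0) : ZMod p × ZMod q),
          (Equiv.addLeft ((0, 1) : ZMod p × ZMod q)) ^ b * alphaP q g} := by
  haveI : Fact p.Prime := ⟨hp⟩
  haveI : Fact q.Prime := ⟨hq⟩
  have hq2 : 2 ≤ q := hq.two_le
  -- cardinality of G
  have eCG : Nat.card G = p * q := by
    have hinj : Function.Injective (fun x : G => x.1 0) := by
      intro x y hxy
      obtain ⟨u, -, huniq⟩ := hreg 0 (x.1 0)
      have e1 := huniq x.1 ⟨x.2, rfl⟩
      have e2 := huniq y.1 ⟨y.2, hxy.symm⟩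
      exact Subtype.ext (e1.trans e2.symm)
    have hsurj : Function.Surjective (fun x : G => x.1 0) := by
      intro y
      obtain ⟨u, ⟨hu, hu0⟩, -⟩ := hreg 0 y
      exact ⟨⟨u, hu⟩, hu0⟩
    rw [Nat.card_congr (Equiv.ofBijective _ ⟨hinj, hsurj⟩), Nat.card_prod,
      Nat.card_zmod, Nat.card_zmod]
  set Θ := theta0 hp hq hlt hmod hsub with hΘ
  have hpow : ∀ x : G, Θ x ^ (p * q) = 1 := by
    intro x
    rw [← map_pow, ← eCG, pow_card_eq_one', map_one]
  -- the second component of Θ is always 1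
  have key_v : ∀ x : G, (Θ x).2 = 1 := by
    intro x
    obtain ⟨F, hF, -⟩ := hol_pi2 (hsub x.2)
    obtain ⟨-, -, hvne'⟩ := addEquiv_diag hp hq hlt hmod F
    have hvne : (Θ x).2 ≠ 0 := by
      show (addPi2 x.1 (0, 1)).2 ≠ 0
      rw [hF]; exact hvne'
    have h1 : (Θ x).2 ^ (p * q) = 1 := by
      have := congrArg Prod.snd (hpow x); simpa using this
    have h2 : (Θ x).2 ^ (q - 1) = 1 := ZMod.pow_card_sub_one_eq_one hvne
    set d := orderOf (Θ x).2 with hd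
    have hd1 : d ∣ p * q := orderOf_dvd_iff_pow_eq_one.mpr h1
    have hd2 : d ∣ q - 1 := orderOf_dvd_iff_pow_eq_one.mpr h2
    have hdpos : 0 < d := Nat.pos_of_dvd_of_pos hd2 (by omega)
    have hdle : d ≤ q - 1 := Nat.le_of_dvd (by omega) hd2
    have hcop : Nat.Coprime d q :=
      ((hq.coprime_iff_not_dvd).mpr (fun hdvd => by
        have := Nat.le_of_dvd hdpos hdvd; omega)).symm
    have hdp : d ∣ p := hcop.dvd_of_dvd_mul_right hd1
    have hd1' : d = 1 := by
      rcases (Nat.Prime.eq_one_or_self_of_dvd hp d hdp) with h | h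
      · exact h
      · omega
    have := orderOf_eq_one_iff.mp hd1'
    exact this
  -- first component has q-th power 1
  have key_u : ∀ x : G, (Θ x).1 ^ q = 1 := by
    intro x
    obtain ⟨F, hF, -⟩ := hol_pi2 (hsub x.2)
    obtain ⟨-, hune', -⟩ := addEquiv_diag hp hq hlt hmod F
    have hune : (Θ x).1 ≠ 0 := by
      show (addPi2 x.1 (1, 0)).1 ≠ 0
      rw [hF]; exact hune'
    have h1 : (Θ x).1 ^ (p * q) = 1 := by
      have := congrArg Prod.fst (hpow x); simpa using this
    have h2 : (Θ x).1 ^ (p - 1) = 1 := ZMod.pow_card_sub_one_eq_one hune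
    set d := orderOf (Θ x).1 with hd
    have hd1 : d ∣ p * q := orderOf_dvd_iff_pow_eq_one.mpr h1
    have hd2 : d ∣ p - 1 := orderOf_dvd_iff_pow_eq_one.mpr h2
    have hdpos : 0 < d := Nat.pos_of_dvd_of_pos hd2 (by omega)
    have hdle : d ≤ p - 1 := Nat.le_of_dvd (by omega) hd2
    have hcop : Nat.Coprime d p :=
      ((hp.coprime_iff_not_dvd).mpr (fun hdvd => by
        have := Nat.le_of_dvd hdpos hdvd; omega)).symm
    have hdq : d ∣ q := hcop.dvd_of_dvd_mul_left hd1
    exact orderOf_dvd_iff_pow_eq_one.mp (hd ▸ hdq)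
  -- the set of automorphism parts and its first components
  have hSdiag : ∀ h (hh : h ∈ G), (∀ x : ZMod p × ZMod q,
      addPi2 h x = ((addPi2 h (1, 0)).1 * x.1, x.2)) ∧ (addPi2 h (1, 0)).1 ≠ 0 := by
    intro h hh
    obtain ⟨F, hF, -⟩ := hol_pi2 (hsub hh)
    obtain ⟨hdiag, hune, -⟩ := addEquiv_diag hp hq hlt hmod F
    have hv1 : (addPi2 h (0, 1)).2 = 1 := key_v ⟨h, hh⟩
    rw [hF] at hv1 ⊢
    refine ⟨fun x => ?_, hune⟩
    rw [hdiag x, hv1, one_mul]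
  set S : Set ((ZMod p × ZMod q) → (ZMod p × ZMod q)) :=
    addPi2 '' (G : Set (Equiv.Perm (ZMod p × ZMod q))) with hS
  have hSinj : Set.InjOn (fun f : (ZMod p × ZMod q) → (ZMod p × ZMod q) => (f (1, 0)).1) S := by
    rintro - ⟨h₁, hh₁, rfl⟩ - ⟨h₂, hh₂, rfl⟩ he
    funext x
    rw [(hSdiag h₁ hh₁).1 x, (hSdiag h₂ hh₂).1 x]
    simp only at he
    rw [he]
  set U : Set (ZMod p) := (fun f : (ZMod p × ZMod q) → (ZMod p × ZMod q) => (f (1, 0)).1) '' S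
    with hU
  have hUcard : U.ncard = q := by
    rw [hU, Set.ncard_image_of_injOn hSinj, ← Nat.card_coe_set_eq, hcard]
  set R : Set (ZMod p) := {u : ZMod p | u ^ q = 1} with hR
  have hUR : U ⊆ R := by
    rintro - ⟨-, ⟨h, hh, rfl⟩, rfl⟩
    exact key_u ⟨h, hh⟩
  have hRcard : R.ncard ≤ q := by
    classical
    have hRF : R = ((Polynomial.nthRoots q (1 : ZMod p)).toFinset : Set (ZMod p)) := by
      ext u
      simp [hR, Polynomial.mem_nthRoots hq.pos]
    rw [hRF, Set.ncard_coe_finset]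
    exact le_trans (Multiset.toFinset_card_le _) (Polynomial.card_nthRoots q 1)
  have hUReq : U = R := Set.eq_of_subset_of_ncard_le hUR (hRcard.trans_eq hUcard.symm)
    (Set.toFinite R)
  have hgmem : (g : ZMod p) ∈ U := by rw [hUReq]; exact hg1
  obtain ⟨-, ⟨h₀, hh₀, rfl⟩, hfu⟩ := hgmem
  simp only at hfu
  have hdiag0 : ∀ x : ZMod p × ZMod q, addPi2 h₀ x = ((g : ZMod p) * x.1, x.2) := by
    intro x
    rw [(hSdiag h₀ hh₀).1 x, hfu]
  have hform : ∀ x : ZMod p × ZMod q, h₀ x = h₀ 0 + ((g : ZMod p) * x.1, x.2) := by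
    intro x
    obtain ⟨F, hF, hFx⟩ := hol_pi2 (hsub hh₀)
    rw [hFx x, show F x = addPi2 h₀ x from (congrFun hF x).symm, hdiag0 x]
  -- translations in G
  have addLeft_zero' : Equiv.addLeft ((0 : ZMod p × ZMod q)) = 1 := by
    refine Equiv.ext fun x => ?_
    simp [Equiv.Perm.one_apply]
  have addLeft_inv' : ∀ c : ZMod p × ZMod q,
      (Equiv.addLeft c)⁻¹ = Equiv.addLeft (-c) := by
    intro c
    rw [eq_comm, eq_inv_iff_mul_eq_one, addLeft_mul, neg_add_cancel, addLeft_zero']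
  set D : AddSubgroup (ZMod p × ZMod q) :=
    { carrier := {c | Equiv.addLeft c ∈ G}
      zero_mem' := by
        show Equiv.addLeft (0 : ZMod p × ZMod q) ∈ G
        rw [addLeft_zero']; exact one_mem G
      add_mem' := by
        intro c d hc hd
        show Equiv.addLeft (c + d) ∈ G
        rw [← addLeft_mul]; exact mul_mem hc hd
      neg_mem' := by
        intro c hc
        show Equiv.addLeft (-c) ∈ G
        rw [← addLeft_inv']; exact inv_mem hc } with hD
  -- the kernel of Θ.toHomUnits is the translations
  set Θu := Θ.toHomUnits with hΘu
  have hker_mem : ∀ x : G, x ∈ Θu.ker ↔ Θ x = 1 := by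
    intro x
    rw [MonoidHom.mem_ker]
    constructor
    · intro hx
      have := congrArg Units.val hx
      rwa [MonoidHom.coe_toHomUnits] at this
    · intro hx
      refine Units.ext ?_
      rw [MonoidHom.coe_toHomUnits, hx, Units.val_one]
  have hkerD : Nat.card Θu.ker = Nat.card D := by
    have hto : ∀ x : G, x ∈ Θu.ker → x.1 0 ∈ D := by
      intro x hx
      have hx1 : Θ x = 1 := (hker_mem x).mp hx
      obtain ⟨F, hF, hFx⟩ := hol_pi2 (hsub x.2)
      obtain ⟨hdiag, -, -⟩ := addEquiv_diag hp hq hlt hmod F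
      have hid : ∀ y : ZMod p × ZMod q, addPi2 x.1 y = y := by
        intro y
        rw [hF, hdiag y]
        have h1 : (F (1, 0)).1 = 1 := by
          rw [← hF]; exact congrArg Prod.fst hx1
        have h2 : (F (0, 1)).2 = 1 := by
          rw [← hF]; exact congrArg Prod.snd hx1
        rw [h1, h2, one_mul, one_mul]
      have heq : Equiv.addLeft (x.1 0) = x.1 := by
        refine Equiv.ext fun y => ?_
        show x.1 0 + y = x.1 y
        conv_rhs => rw [hFx y, show F y = addPi2 x.1 y from (congrFun hF y).symm, hid y]
      show Equiv.addLeft (x.1 0) ∈ G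
      rw [heq]; exact x.2
    have hfrom : ∀ c : ZMod p × ZMod q, c ∈ D → ∀ hcG : Equiv.addLeft c ∈ G,
        (⟨Equiv.addLeft c, hcG⟩ : G) ∈ Θu.ker := by
      intro c hc hcG
      rw [hker_mem]
      have hpi : addPi2 (Equiv.addLeft c) = id := by
        funext y
        show -(Equiv.addLeft c 0) + Equiv.addLeft c y = y
        show -(c + 0) + (c + y) = y
        abel
      show ((addPi2 (Equiv.addLeft c) (1, 0)).1, (addPi2 (Equiv.addLeft c) (0, 1)).2) = 1
      rw [hpi]
      rfl
    refine Nat.card_congr ⟨fun x => ⟨x.1.1 0, hto x.1 x.2⟩,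
      fun d => ⟨⟨Equiv.addLeft d.1, d.2⟩, hfrom d.1 d.2 d.2⟩, ?_, ?_⟩
    · intro x
      refine Subtype.ext (Subtype.ext ?_)
      show Equiv.addLeft (x.1.1 0) = x.1.1
      -- recompute as in hto
      have hx1 : Θ x.1 = 1 := (hker_mem x.1).mp x.2
      obtain ⟨F, hF, hFx⟩ := hol_pi2 (hsub x.1.2)
      obtain ⟨hdiag, -, -⟩ := addEquiv_diag hp hq hlt hmod F
      have hid : ∀ y : ZMod p × ZMod q, addPi2 x.1.1 y = y := by
        intro y
        rw [hF, hdiag y]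
        have h1 : (F (1, 0)).1 = 1 := by
          rw [← hF]; exact congrArg Prod.fst hx1
        have h2 : (F (0, 1)).2 = 1 := by
          rw [← hF]; exact congrArg Prod.snd hx1
        rw [h1, h2, one_mul, one_mul]
      refine Equiv.ext fun y => ?_
      show x.1.1 0 + y = x.1.1 y
      conv_rhs => rw [hFx y, show F y = addPi2 x.1.1 y from (congrFun hF y).symm, hid y]
    · intro d
      refine Subtype.ext ?_
      show Equiv.addLeft d.1 0 = d.1
      show d.1 + 0 = d.1
      exact add_zero d.1
  -- card of the range is q
  have hto : ∀ w : Θu.range, ((w : (ZMod p × ZMod q)ˣ) : ZMod p × ZMod q).1 ∈ U := by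
    rintro ⟨-, x, rfl⟩
    exact ⟨addPi2 x.1, ⟨x.1, x.2, rfl⟩, rfl⟩
  have hrange : Nat.card Θu.range = q := by
    have hbij : Function.Bijective
        (fun w : Θu.range => (⟨((w : (ZMod p × ZMod q)ˣ) : ZMod p × ZMod q).1, hto w⟩ : U)) := by
      constructor
      · intro w₁ w₂ he
        have he1 := congrArg Subtype.val he
        simp only at he1
        obtain ⟨x₁, hx₁⟩ := w₁.2
        obtain ⟨x₂, hx₂⟩ := w₂.2
        have h21 : ((w₁ : (ZMod p × ZMod q)ˣ) : ZMod p × ZMod q).2 = 1 := by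
          rw [← hx₁]; exact key_v x₁
        have h22 : ((w₂ : (ZMod p × ZMod q)ˣ) : ZMod p × ZMod q).2 = 1 := by
          rw [← hx₂]; exact key_v x₂
        exact Subtype.ext (Units.ext (Prod.ext he1 (h21.trans h22.symm)))
      · intro u
        obtain ⟨-, ⟨h, hh, rfl⟩, hev⟩ := u.2
        refine ⟨⟨Θu ⟨h, hh⟩, ⟨⟨h, hh⟩, rfl⟩⟩, ?_⟩
        exact Subtype.ext hev
    rw [Nat.card_congr (Equiv.ofBijective _ hbij), Nat.card_coe_set_eq, hUcard]
  -- card of D is p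
  have hDcard : Nat.card D = p := by
    have h1 : Nat.card G = Nat.card (G ⧸ Θu.ker) * Nat.card Θu.ker :=
      Subgroup.card_eq_card_quotient_mul_card_subgroup _
    have h2 : Nat.card (G ⧸ Θu.ker) = q := by
      rw [Nat.card_congr (QuotientGroup.quotientKerEquivRange Θu).toEquiv, hrange]
    rw [← hkerD]
    rw [eCG, h2] at h1
    exact Nat.eq_of_mul_eq_mul_left hq.pos
      (show q * Nat.card Θu.ker = q * p by rw [← h1]; ring)
  -- D is contained in ZMod p × {0}
  have hDsnd : ∀ c ∈ D, c.2 = 0 := by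
    intro c hc
    have h1 : Nat.card D • (⟨c, hc⟩ : D) = 0 := card_nsmul_eq_zero'
    rw [hDcard] at h1
    have h2 : p • c = 0 := by
      have := congrArg (Subtype.val) h1
      simpa using this
    have h3 : (p : ZMod q) * c.2 = 0 := by
      have := congrArg Prod.snd h2
      simpa [nsmul_eq_mul] using this
    rwa [pcast_one hq hmod, one_mul] at h3
  -- (1,0) is in D
  have hσG : Equiv.addLeft ((1, 0) : ZMod p × ZMod q) ∈ G := by
    haveI : Nontrivial D := by
      rw [← Finite.one_lt_card_iff_nontrivial, hDcard]
      exact hp.one_lt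
    obtain ⟨d, hd⟩ := exists_ne (0 : D)
    have hd2 : (d : ZMod p × ZMod q).2 = 0 := hDsnd d.1 d.2
    have hd1 : (d : ZMod p × ZMod q).1 ≠ 0 := by
      intro h0
      exact hd (Subtype.ext (Prod.ext h0 hd2))
    have hmem := D.nsmul_mem d.2 (((d : ZMod p × ZMod q).1⁻¹).val)
    have heq : (((d : ZMod p × ZMod q).1⁻¹).val : ℕ) • (d : ZMod p × ZMod q)
        = ((1 : ZMod p), (0 : ZMod q)) := by
      refine Prod.ext ?_ ?_
      · show (((d : ZMod p × ZMod q).1⁻¹).val : ℕ) • (d : ZMod p × ZMod q).1 = 1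
        rw [nsmul_eq_mul, ZMod.natCast_zmod_val, inv_mul_cancel₀ hd1]
      · show (((d : ZMod p × ZMod q).1⁻¹).val : ℕ) • (d : ZMod p × ZMod q).2 = 0
        rw [hd2, smul_zero]
    rw [heq] at hmem
    exact hmem
  -- extract b
  set a : ZMod p := (h₀ 0).1 with ha
  set b : ZMod q := (h₀ 0).2 with hb
  have hh0eq : h₀ = Equiv.addLeft (h₀ 0) * alphaP q g := by
    refine Equiv.ext fun x => ?_
    rw [Equiv.Perm.mul_apply, alphaP_apply]
    exact hform x
  have haG : Equiv.addLeft ((a, 0) : ZMod p × ZMod q) ∈ G := by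
    have h1 := pow_mem hσG a.val
    rwa [addLeft_pow, show a.val • ((1 : ZMod p), (0 : ZMod q)) = (a, 0) from
      Prod.ext (by simp [nsmul_eq_mul, ZMod.natCast_zmod_val]) (by simp)] at h1
  have htauG : Equiv.addLeft (((0 : ZMod p), b) : ZMod p × ZMod q) * alphaP q g ∈ G := by
    have h1 := mul_mem (inv_mem haG) hh₀
    have h2 : (Equiv.addLeft ((a, 0) : ZMod p × ZMod q))⁻¹ * h₀
        = Equiv.addLeft (((0 : ZMod p), b) : ZMod p × ZMod q) * alphaP q g := by
      rw [hh0eq, addLeft_inv', ← mul_assoc, addLeft_mul]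
      congr 2
      refine Prod.ext ?_ ?_
      · show -(a, (0 : ZMod q)).1 + (h₀ 0).1 = 0
        rw [← ha]; simp
      · show -(a, (0 : ZMod q)).2 + (h₀ 0).2 = b
        rw [← hb]; simp
    rwa [h2] at h1
  have hbne : b ≠ 0 := by
    intro hb0
    have hαG : alphaP q g ∈ G := by
      have := htauG
      rwa [hb0, show ((0 : ZMod p), (0 : ZMod q)) = (0 : ZMod p × ZMod q) from rfl,
        addLeft_zero', one_mul] at this
    obtain ⟨u, -, huniq⟩ := hreg 0 0
    have e1 := huniq (alphaP q g) ⟨hαG, by rw [alphaP_apply]; simp⟩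
    have e2 := huniq 1 ⟨one_mem G, Equiv.Perm.one_apply 0⟩
    have : alphaP q g = 1 := e1.trans e2.symm
    have hg_eq : (g : ZMod p) = 1 := by
      have := congrArg (fun e : Equiv.Perm (ZMod p × ZMod q) => (e (1, 0)).1) this
      simpa [alphaP_apply, Equiv.Perm.one_apply] using this
    have : g = 1 := Units.ext hg_eq
    rw [this, orderOf_one] at hg
    omega
  refine ⟨b.val, ?_, ?_, ?_⟩
  · rw [Nat.one_le_iff_ne_zero]
    intro h0
    exact hbne ((ZMod.val_eq_zero b).mp h0)
  · exact Nat.le_sub_one_of_lt (ZMod.val_lt b)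
  · have hle : Subgroup.closure
        {Equiv.addLeft ((1, 0) : ZMod p × ZMod q),
          (Equiv.addLeft ((0, 1) : ZMod p × ZMod q)) ^ b.val * alphaP q g} ≤ G := by
      rw [Subgroup.closure_le]
      rintro x (rfl | rfl)
      · exact hσG
      · rwa [addLeft_pow, show b.val • ((0 : ZMod p), (1 : ZMod q)) = ((0 : ZMod p), b) from
          Prod.ext (by simp) (by simp [nsmul_eq_mul, ZMod.natCast_zmod_val])]
    have hclcard : Nat.card (Subgroup.closure
        {Equiv.addLeft ((1, 0) : ZMod p × ZMod q),
          (Equiv.addLeft ((0, 1) : ZMod p × ZMod q)) ^ b.val * alphaP q g}) = p * q :=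
      card_closure hq.one_lt hg hg1 hφ b.val
    symm
    have hsets : (Subgroup.closure
        {Equiv.addLeft ((1, 0) : ZMod p × ZMod q),
          (Equiv.addLeft ((0, 1) : ZMod p × ZMod q)) ^ b.val * alphaP q g} :
            Set (Equiv.Perm (ZMod p × ZMod q))) = (G : Set (Equiv.Perm (ZMod p × ZMod q))) := by
      refine Set.eq_of_subset_of_ncard_le ?_ ?_ (Set.toFinite _)
      · exact hle
      · rw [← Nat.card_coe_set_eq, ← Nat.card_coe_set_eq,
          SetLike.coe_sort_coe, SetLike.coe_sort_coe, eCG, hclcard]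
    exact SetLike.coe_injective hsets
end St12

/-- Let `p > q` be primes with `p ≡ 1 (mod q)`, `C = ℤ_p × ℤ_q` the cyclic group of
order `pq`, `σ, τ` the translations by `(1,0)` and `(0,1)`, and `α ∈ Aut(C)` given by
`α(n,m) = (g·n, m)` where `g` has multiplicative order `q` mod `p`.  The regular
subgroups of `Hol(C)` whose image under `π₂` has size `q` are exactly the
`G_b = ⟨σ, τ^b α⟩` for `1 ≤ b ≤ q-1`, and each `G_b` is isomorphic to the non-abelian
group `ℤ_p ⋊_g ℤ_q`. -/
theorem stmt12 (p q : ℕ) (hp : p.Prime) (hq : q.Prime) (hlt : q < p)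
    (hmod : p % q = 1) (g : (ZMod p)ˣ) (hg : orderOf g = q)
    (φ : Multiplicative (ZMod q) →* MulAut (Multiplicative (ZMod p)))
    (hφ : ∀ (m : ZMod q) (n : ZMod p),
      φ (Multiplicative.ofAdd m) (Multiplicative.ofAdd n) =
        Multiplicative.ofAdd ((g : ZMod p) ^ m.val * n)) :
    (∀ G : Subgroup (Equiv.Perm (ZMod p × ZMod q)),
      ((G : Set (Equiv.Perm (ZMod p × ZMod q))) ⊆ AddHolSet (ZMod p × ZMod q) ∧
        IsRegularPermGroup G ∧
        Nat.card (addPi2 '' (G : Set (Equiv.Perm (ZMod p × ZMod q)))) = q) ↔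
      (∃ b : ℕ, 1 ≤ b ∧ b ≤ q - 1 ∧
        G = Subgroup.closure
          {Equiv.addLeft ((1, 0) : ZMod p × ZMod q),
            (Equiv.addLeft ((0, 1) : ZMod p × ZMod q)) ^ b *
              Equiv.prodCongr (Units.mulLeft g) (Equiv.refl (ZMod q))})) ∧
    (∀ b : ℕ, 1 ≤ b → b ≤ q - 1 →
      Nonempty
        ((Subgroup.closure
          {Equiv.addLeft ((1, 0) : ZMod p × ZMod q),
            (Equiv.addLeft ((0, 1) : ZMod p × ZMod q)) ^ b *
              Equiv.prodCongr (Units.mulLeft g) (Equiv.refl (ZMod q))}) ≃*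
          (Multiplicative (ZMod p) ⋊[φ] Multiplicative (ZMod q)))) := by
  haveI : Fact p.Prime := ⟨hp⟩
  haveI : Fact q.Prime := ⟨hq⟩
  haveI : NeZero p := ⟨hp.pos.ne'⟩
  haveI : NeZero q := ⟨hq.pos.ne'⟩
  have hg1 : (g : ZMod p) ^ q = 1 := by
    have h := pow_orderOf_eq_one g
    rw [hg] at h
    calc (g : ZMod p) ^ q = ((g ^ q : (ZMod p)ˣ) : ZMod p) := by
          rw [Units.val_pow_eq_pow_val]
      _ = 1 := by rw [h, Units.val_one]
  have halpha : Equiv.prodCongr (Units.mulLeft g) (Equiv.refl (ZMod q)) = St12.alphaP q g := rfl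
  constructor
  · intro G
    rw [halpha]
    constructor
    · rintro ⟨hsub, hreg, hcard⟩
      exact St12.forward hp hq hlt hmod hg hg1 hφ hsub hreg hcard
    · rintro ⟨b, hb1, hb2, rfl⟩
      have hB : ((b : ZMod q)) ≠ 0 := by
        rw [Ne, ZMod.natCast_eq_zero_iff]
        intro hdvd
        have := Nat.le_of_dvd (by omega) hdvd
        omega
      rw [← St12.psi_range_eq (φ := φ) hq.one_lt hg1 hφ b]
      refine ⟨?_, ?_, ?_⟩
      · rintro x ⟨z, rfl⟩
        exact St12.psi_mem_hol hg1 hφ (b : ZMod q) z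
      · exact St12.psi_regular hg hg1 hφ hB
      · exact St12.card_addPi2_image hg hg1 hφ (b : ZMod q)
  · intro b hb1 hb2
    rw [halpha]
    exact ⟨St12.closureIso hq.one_lt hg hg1 hφ b⟩
end

section
/- Let p > q be primes with p ≡ 1 (mod q) and M = ℤ_p ⋊_g ℤ_q the non-abelian group of order pq, with α = φ_{1,1} and β = φ_{g,0} in Aut(M). Then ⟨α, β⟩ is the unique subgroup of order pq of Aut(M). -/
open SemidirectProduct Subgroup Multiplicative

namespace Stmt15Aux

variable {p q : ℕ} {φ : Multiplicative (ZMod q) →* MulAut (Multiplicative (ZMod p))}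

lemma inl_pow (a : ZMod p) (n : ℕ) :
    (inl (ofAdd a) : Multiplicative (ZMod p) ⋊[φ] Multiplicative (ZMod q)) ^ n
      = inl (ofAdd ((n : ZMod p) * a)) := by
  rw [← map_pow, ← ofAdd_nsmul, nsmul_eq_mul]

lemma inr_pow (b : ZMod q) (n : ℕ) :
    (inr (ofAdd b) : Multiplicative (ZMod p) ⋊[φ] Multiplicative (ZMod q)) ^ n
      = inr (ofAdd ((n : ZMod q) * b)) := by
  rw [← map_pow, ← ofAdd_nsmul, nsmul_eq_mul]

lemma inl_eq_pow [NeZero p] (a : ZMod p) :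
    (inl (ofAdd a) : Multiplicative (ZMod p) ⋊[φ] Multiplicative (ZMod q))
      = (inl (ofAdd (1 : ZMod p))) ^ a.val := by
  rw [inl_pow]
  congr 1
  simp [ZMod.natCast_val, ZMod.cast_id]

lemma inr_eq_pow [NeZero q] (b : ZMod q) :
    (inr (ofAdd b) : Multiplicative (ZMod p) ⋊[φ] Multiplicative (ZMod q))
      = (inr (ofAdd (1 : ZMod q))) ^ b.val := by
  rw [inr_pow]
  congr 1
  simp [ZMod.natCast_val, ZMod.cast_id]

lemma decomp [NeZero p] [NeZero q] (x : Multiplicative (ZMod p) ⋊[φ] Multiplicative (ZMod q)) :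
    x = (inl (ofAdd (1 : ZMod p))) ^ (toAdd x.left).val *
        (inr (ofAdd (1 : ZMod q))) ^ (toAdd x.right).val := by
  conv_lhs => rw [← inl_left_mul_inr_right x]
  rw [← inl_eq_pow, ← inr_eq_pow, ofAdd_toAdd, ofAdd_toAdd]

lemma aut_ext [NeZero p] [NeZero q]
    {e₁ e₂ : MulAut (Multiplicative (ZMod p) ⋊[φ] Multiplicative (ZMod q))}
    (h1 : e₁ (inl (ofAdd (1 : ZMod p))) = e₂ (inl (ofAdd (1 : ZMod p))))
    (h2 : e₁ (inr (ofAdd (1 : ZMod q))) = e₂ (inr (ofAdd (1 : ZMod q)))) : e₁ = e₂ := by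
  refine MulEquiv.ext fun x => ?_
  conv_lhs => rw [decomp x]
  conv_rhs => rw [decomp x]
  simp only [map_mul, map_pow, h1, h2]


lemma right_eq_one_of_pow_p [NeZero q] (hmod : p % q = 1)
    {x : Multiplicative (ZMod p) ⋊[φ] Multiplicative (ZMod q)} (hx : x ^ p = 1) :
    x.right = 1 := by
  have h1 : (x ^ p).right = x.right ^ p := by
    have := map_pow (rightHom : Multiplicative (ZMod p) ⋊[φ] Multiplicative (ZMod q) →*
      Multiplicative (ZMod q)) x p
    simpa using this
  have h2 : x.right ^ p = x.right := by
    have : x.right ^ p = ofAdd ((p : ZMod q) * toAdd x.right) := by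
      rw [← nsmul_eq_mul, ofAdd_nsmul, ofAdd_toAdd]
    rw [this]
    have hp1 : ((p : ℕ) : ZMod q) = 1 := by
      rw [← ZMod.natCast_mod, hmod, Nat.cast_one]
    rw [hp1, one_mul, ofAdd_toAdd]
  rw [hx] at h1
  simp only [one_right] at h1
  rw [← h2, ← h1]

/-- the value of an automorphism on the canonical generator of the `p`-part -/
def rv (e : MulAut (Multiplicative (ZMod p) ⋊[φ] Multiplicative (ZMod q))) : ZMod p :=
  toAdd (e (inl (ofAdd (1 : ZMod p)))).left

lemma apply_inl_one [NeZero p] [NeZero q] (hmod : p % q = 1)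
    (e : MulAut (Multiplicative (ZMod p) ⋊[φ] Multiplicative (ZMod q))) :
    e (inl (ofAdd (1 : ZMod p))) = inl (ofAdd (rv e)) := by
  have hpow : (e (inl (ofAdd (1 : ZMod p)))) ^ p = 1 := by
    rw [← map_pow, inl_pow, ZMod.natCast_self, zero_mul]
    simpa using map_one e.toMonoidHom
  have hr : (e (inl (ofAdd (1 : ZMod p)))).right = 1 := right_eq_one_of_pow_p hmod hpow
  conv_lhs => rw [← inl_left_mul_inr_right (e (inl (ofAdd (1 : ZMod p))))]
  rw [hr]
  simp [rv]

lemma apply_inl [NeZero p] [NeZero q] (hmod : p % q = 1)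
    (e : MulAut (Multiplicative (ZMod p) ⋊[φ] Multiplicative (ZMod q))) (a : ZMod p) :
    e (inl (ofAdd a)) = inl (ofAdd (rv e * a)) := by
  rw [inl_eq_pow a, map_pow, apply_inl_one hmod e, inl_pow]
  congr 2
  rw [ZMod.natCast_val, ZMod.cast_id, mul_comm]

lemma rv_ne_zero [NeZero p] [NeZero q] (hp : 1 < p) (hmod : p % q = 1)
    (e : MulAut (Multiplicative (ZMod p) ⋊[φ] Multiplicative (ZMod q))) : rv e ≠ 0 := by
  haveI := Fact.mk hp
  intro h
  have h1 : e (inl (ofAdd (1 : ZMod p))) = e 1 := by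
    rw [apply_inl_one hmod e, h, map_one]
    rfl
  have h2 := e.injective h1
  have h3 : (1 : ZMod p) = 0 := by
    have := congrArg (fun z => toAdd z.left) h2
    simpa using this
  exact one_ne_zero h3

variable (φ) in
/-- restriction of an automorphism to the `p`-part, as a unit of `ZMod p` -/
noncomputable def R [Fact p.Prime] [NeZero q] (hp : 1 < p) (hmod : p % q = 1) :
    MulAut (Multiplicative (ZMod p) ⋊[φ] Multiplicative (ZMod q)) →* (ZMod p)ˣ where
  toFun e := Units.mk0 (rv e) (rv_ne_zero hp hmod e)
  map_one' := by
    apply Units.ext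
    simp [rv]
  map_mul' e₁ e₂ := by
    apply Units.ext
    have h : (e₁ * e₂) (inl (ofAdd (1 : ZMod p))) = inl (ofAdd (rv e₁ * rv e₂)) := by
      have h0 : (e₁ * e₂) (inl (ofAdd (1 : ZMod p))) = e₁ (e₂ (inl (ofAdd 1))) := rfl
      rw [h0, apply_inl_one hmod e₂, apply_inl hmod e₁ (rv e₂)]
    have h2 := apply_inl_one hmod (e₁ * e₂)
    rw [h] at h2
    have h3 := inl_injective h2
    simpa using (congrArg toAdd h3).symm

lemma conj_inl (y : Multiplicative (ZMod p) ⋊[φ] Multiplicative (ZMod q))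
    (m : Multiplicative (ZMod p)) :
    y * inl m * y⁻¹ = inl (φ y.right m) := by
  ext <;> simp [mul_comm, mul_left_comm]

lemma ker_apply_inr [Fact p.Prime] [NeZero q] {g : ZMod p} (hq1 : 1 < q) (hmod : p % q = 1)
    (hg : orderOf g = q)
    (hφ : ∀ (m : ZMod q) (n : ZMod p), φ (ofAdd m) (ofAdd n) = ofAdd (g ^ m.val * n))
    {e : MulAut (Multiplicative (ZMod p) ⋊[φ] Multiplicative (ZMod q))} (he : rv e = 1) :
    e (inr (ofAdd (1 : ZMod q)))
      = inl (ofAdd (toAdd (e (inr (ofAdd (1 : ZMod q)))).left)) * inr (ofAdd (1 : ZMod q)) := by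
  haveI := Fact.mk hq1
  set y := e (inr (ofAdd (1 : ZMod q))) with hy
  have hrel : (inr (ofAdd (1 : ZMod q)) : Multiplicative (ZMod p) ⋊[φ] Multiplicative (ZMod q)) *
      inl (ofAdd (1 : ZMod p)) * (inr (ofAdd (1 : ZMod q)))⁻¹ = inl (ofAdd g) := by
    rw [← map_inv, ← inl_aut, hφ, ZMod.val_one, pow_one, mul_one]
  have h1 : y * inl (ofAdd (1 : ZMod p)) * y⁻¹ = inl (ofAdd g) := by
    have := congrArg e hrel
    simpa [map_mul, map_inv, apply_inl_one hmod e, he, apply_inl hmod e, one_mul, ← hy] using this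
  rw [conj_inl] at h1
  have h2 : φ y.right (ofAdd (1 : ZMod p)) = ofAdd g := inl_injective h1
  have h3 : y.right = ofAdd (1 : ZMod q) := by
    have h4 : φ (ofAdd (toAdd y.right)) (ofAdd (1 : ZMod p)) = ofAdd g := by
      rwa [ofAdd_toAdd]
    rw [hφ, mul_one] at h4
    have h5 : g ^ (toAdd y.right).val = g ^ 1 := by
      rw [pow_one]; exact ofAdd.injective h4
    have hgu : IsUnit g := by
      refine IsUnit.of_pow_eq_one (n := q) ?_ (by omega)
      rw [← hg]; exact pow_orderOf_eq_one g
    have h6 : (toAdd y.right).val ≡ 1 [MOD q] := by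
      have h5u : hgu.unit ^ (toAdd y.right).val = hgu.unit ^ 1 := by
        ext
        simpa [hgu.unit_spec] using h5
      have := pow_eq_pow_iff_modEq.mp h5u
      rwa [show orderOf hgu.unit = q by rw [← orderOf_units, hgu.unit_spec, hg]] at this
    have h7 : ((toAdd y.right).val : ZMod q) = ((1 : ℕ) : ZMod q) :=
      (ZMod.natCast_eq_natCast_iff _ _ _).mpr h6
    rw [ZMod.natCast_val, ZMod.cast_id, Nat.cast_one] at h7
    rw [← ofAdd_toAdd y.right, h7]
  conv_lhs => rw [← inl_left_mul_inr_right y]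
  rw [h3, ofAdd_toAdd]

lemma ker_ext [Fact p.Prime] [NeZero q] {g : ZMod p} (hq1 : 1 < q) (hmod : p % q = 1)
    (hg : orderOf g = q)
    (hφ : ∀ (m : ZMod q) (n : ZMod p), φ (ofAdd m) (ofAdd n) = ofAdd (g ^ m.val * n))
    {e₁ e₂ : MulAut (Multiplicative (ZMod p) ⋊[φ] Multiplicative (ZMod q))}
    (h1 : rv e₁ = 1) (h2 : rv e₂ = 1)
    (h : toAdd (e₁ (inr (ofAdd (1 : ZMod q)))).left
        = toAdd (e₂ (inr (ofAdd (1 : ZMod q)))).left) : e₁ = e₂ := by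
  refine aut_ext ?_ ?_
  · rw [apply_inl_one hmod, apply_inl_one hmod, h1, h2]
  · rw [ker_apply_inr hq1 hmod hg hφ h1, ker_apply_inr hq1 hmod hg hφ h2, h]

lemma R_apply [Fact p.Prime] [NeZero q] (hp : 1 < p) (hmod : p % q = 1)
    (e : MulAut (Multiplicative (ZMod p) ⋊[φ] Multiplicative (ZMod q))) :
    ((R φ hp hmod) e : ZMod p) = rv e := rfl

lemma card_eq_card_map_mul_card_inf_ker {Γ Δ : Type*} [Group Γ] [Group Δ]
    (f : Γ →* Δ) (H : Subgroup Γ) :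
    Nat.card H = Nat.card (H.map f) * Nat.card (f.ker ⊓ H : Subgroup Γ) := by
  have h1 := Subgroup.card_eq_card_quotient_mul_card_subgroup ((f.comp H.subtype).ker)
  have h2 : Nat.card (H ⧸ (f.comp H.subtype).ker) = Nat.card (H.map f) := by
    rw [Nat.card_congr (QuotientGroup.quotientKerEquivRange (f.comp H.subtype)).toEquiv]
    congr 1
    rw [MonoidHom.range_comp, Subgroup.range_subtype]
  have h3 : Nat.card ((f.comp H.subtype).ker) = Nat.card (f.ker ⊓ H : Subgroup Γ) := by
    rw [← MonoidHom.comap_ker]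
    have h4 : f.ker.comap H.subtype = (f.ker ⊓ H).subgroupOf H := by
      rw [Subgroup.inf_subgroupOf_right]
      rfl
    rw [h4, Nat.card_congr (Subgroup.subgroupOfEquivOfLe inf_le_right).toEquiv]
  rw [h1, h2, h3]

lemma subgroup_eq_of_le_of_card_le {Γ : Type*} [Group Γ] {K L : Subgroup Γ} [Finite L]
    (h : K ≤ L) (hc : Nat.card L ≤ Nat.card K) : K = L := by
  apply SetLike.coe_injective
  refine Set.eq_of_subset_of_ncard_le h ?_ (L : Set Γ).toFinite
  rwa [← Nat.card_coe_set_eq, ← Nat.card_coe_set_eq]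

lemma cyclic_subgroup_eq_of_card_eq {Γ : Type*} [Group Γ] [Fintype Γ] [IsCyclic Γ]
    {H K : Subgroup Γ} (h : Nat.card H = Nat.card K) : H = K := by
  classical
  have key : ∀ (L : Subgroup Γ), (L : Set Γ).toFinset
      = Finset.univ.filter (fun x => x ^ (Nat.card L) = 1) := by
    intro L
    refine Finset.eq_of_subset_of_card_le ?_ ?_
    · intro x hx
      rw [Set.mem_toFinset] at hx
      rw [Finset.mem_filter]
      refine ⟨Finset.mem_univ x, ?_⟩
      have hx1 : (⟨x, hx⟩ : L) ^ (Nat.card L) = 1 := pow_card_eq_one'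
      have hx2 := congrArg Subtype.val hx1
      simp only [SubmonoidClass.coe_pow, OneMemClass.coe_one] at hx2
      exact hx2
    · calc (Finset.univ.filter (fun x => x ^ (Nat.card L) = 1)).card
          ≤ Nat.card L := IsCyclic.card_pow_eq_one_le Nat.card_pos
        _ = (L : Set Γ).toFinset.card := by
            rw [Set.toFinset_card]
            exact Nat.card_eq_fintype_card
  have h2 : (H : Set Γ).toFinset = (K : Set Γ).toFinset := by
    rw [key H, key K, h]
  exact SetLike.coe_injective (Set.toFinset_inj.mp h2)

lemma rv_def (e : MulAut (Multiplicative (ZMod p) ⋊[φ] Multiplicative (ZMod q))) :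
    rv e = toAdd (e (inl (ofAdd (1 : ZMod p)))).left := rfl

end Stmt15Aux


open Stmt15Aux Subgroup Multiplicative SemidirectProduct in
/-- Let `p > q` be primes with `p ≡ 1 (mod q)` and `M = ℤ_p ⋊_g ℤ_q` (realized as the
semidirect product `ℤ_p ⋊[φ] ℤ_q`), with `α = φ_{1,1}` (`σ ↦ σ, τ ↦ στ`) and
`β = φ_{g,0}` (`σ ↦ σ^g, τ ↦ τ`) in `Aut(M)`.  Then `⟨α, β⟩` is the unique subgroup of
`Aut(M)` of order `pq`. -/
theorem stmt15 (p q : ℕ) (hp : p.Prime) (hq : q.Prime) (hlt : q < p)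
    (hmod : p % q = 1) (g : ZMod p) (hg : orderOf g = q)
    (φ : Multiplicative (ZMod q) →* MulAut (Multiplicative (ZMod p)))
    (hφ : ∀ (m : ZMod q) (n : ZMod p),
      φ (Multiplicative.ofAdd m) (Multiplicative.ofAdd n) =
        Multiplicative.ofAdd (g ^ m.val * n))
    (α β : MulAut (Multiplicative (ZMod p) ⋊[φ] Multiplicative (ZMod q)))
    (hα₁ : α (SemidirectProduct.inl (Multiplicative.ofAdd (1 : ZMod p))) =
      SemidirectProduct.inl (Multiplicative.ofAdd (1 : ZMod p)))
    (hα₂ : α (SemidirectProduct.inr (Multiplicative.ofAdd (1 : ZMod q))) =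
      SemidirectProduct.inl (Multiplicative.ofAdd (1 : ZMod p)) *
        SemidirectProduct.inr (Multiplicative.ofAdd (1 : ZMod q)))
    (hβ₁ : β (SemidirectProduct.inl (Multiplicative.ofAdd (1 : ZMod p))) =
      SemidirectProduct.inl (Multiplicative.ofAdd (1 : ZMod p)) ^ g.val)
    (hβ₂ : β (SemidirectProduct.inr (Multiplicative.ofAdd (1 : ZMod q))) =
      SemidirectProduct.inr (Multiplicative.ofAdd (1 : ZMod q))) :
    Nat.card (Subgroup.closure {α, β} :
      Subgroup (MulAut (Multiplicative (ZMod p) ⋊[φ] Multiplicative (ZMod q)))) = p * q ∧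
    ∀ H : Subgroup (MulAut (Multiplicative (ZMod p) ⋊[φ] Multiplicative (ZMod q))),
      Nat.card H = p * q → H = Subgroup.closure {α, β} := by
  haveI := Fact.mk hp
  haveI := Fact.mk hq
  have hp2 : 2 ≤ p := hp.two_le
  haveI : NeZero p := ⟨hp.pos.ne'⟩
  haveI : NeZero q := ⟨hq.pos.ne'⟩
  haveI : Finite (Multiplicative (ZMod p) ⋊[φ] Multiplicative (ZMod q)) :=
    Finite.of_injective (fun x => (x.left, x.right)) (by
      intro a b hab
      exact SemidirectProduct.ext (congrArg Prod.fst hab) (congrArg Prod.snd hab))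
  haveI : Finite (MulAut (Multiplicative (ZMod p) ⋊[φ] Multiplicative (ZMod q))) :=
    Finite.of_injective
      (fun e => (e : Multiplicative (ZMod p) ⋊[φ] Multiplicative (ZMod q) →
        Multiplicative (ZMod p) ⋊[φ] Multiplicative (ZMod q)))
      DFunLike.coe_injective
  set Rh := R φ hp.one_lt hmod with hRh
  set C : Subgroup (MulAut (Multiplicative (ZMod p) ⋊[φ] Multiplicative (ZMod q))) :=
    Subgroup.closure {α, β} with hC
  -- basic values
  have hrvα : rv α = 1 := by rw [rv_def, hα₁]; simp
  have hRα : Rh α = 1 := by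
    apply Units.ext
    calc (Rh α : ZMod p) = rv α := rfl
      _ = 1 := hrvα
  have hβ₁' : β (inl (ofAdd (1 : ZMod p))) = inl (ofAdd g) := by
    rw [hβ₁, inl_pow]
    congr 2
    rw [ZMod.natCast_val, ZMod.cast_id, mul_one]
  have hrvβ : rv β = g := by rw [rv_def, hβ₁']; simp
  have hordβ : orderOf (Rh β) = q := by
    rw [← orderOf_units]
    calc orderOf ((Rh β : ZMod p)) = orderOf g := by
          rw [show ((Rh β : ZMod p)) = g from hrvβ]
      _ = q := hg
  -- order of α
  have hαinl : ∀ a : ZMod p, α (inl (ofAdd a)) = inl (ofAdd a) := fun a => by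
    rw [apply_inl hmod α a, hrvα, one_mul]
  have hpowα : ∀ n : ℕ, (α ^ n) (inr (ofAdd (1 : ZMod q)))
      = inl (ofAdd ((n : ZMod p))) * inr (ofAdd (1 : ZMod q)) := by
    intro n
    induction n with
    | zero => simp
    | succ n ih =>
      have hs : (α ^ (n + 1)) (inr (ofAdd (1 : ZMod q)))
          = α ((α ^ n) (inr (ofAdd (1 : ZMod q)))) := by
        rw [pow_succ']; rfl
      rw [hs, ih, map_mul, hαinl, hα₂, ← mul_assoc, ← map_mul]
      congr 2
      rw [← ofAdd_add]
      congr 1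
      push_cast
      ring
  have hαp : α ^ p = 1 := by
    refine aut_ext ?_ ?_
    · have hRαp : Rh (α ^ p) = 1 := by rw [map_pow, hRα, one_pow]
      have hrvp : rv (α ^ p) = 1 := by
        calc rv (α ^ p) = (Rh (α ^ p) : ZMod p) := rfl
          _ = 1 := by rw [hRαp]; rfl
      rw [apply_inl_one hmod, hrvp]
      rfl
    · rw [hpowα p, ZMod.natCast_self]
      simp
  have hαne : α ≠ 1 := by
    intro h
    rw [h] at hα₂
    have h2 := congrArg (fun z => toAdd z.left) hα₂
    simp at h2
  have hordα : orderOf α = p := orderOf_eq_prime hαp hαne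
  have hαker : α ∈ Rh.ker := MonoidHom.mem_ker.mpr hRα
  -- the kernel has at most p elements
  have hker_le : Nat.card Rh.ker ≤ p := by
    have hinj : Function.Injective (fun e : Rh.ker =>
        toAdd (((e : MulAut (Multiplicative (ZMod p) ⋊[φ] Multiplicative (ZMod q))))
          (inr (ofAdd (1 : ZMod q)))).left) := by
      intro e₁ e₂ h12
      have hk : ∀ e : Rh.ker,
          rv ((e : MulAut (Multiplicative (ZMod p) ⋊[φ] Multiplicative (ZMod q)))) = 1 := by
        intro e
        have he := e.2
        rw [MonoidHom.mem_ker] at he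
        calc rv ((e : MulAut (Multiplicative (ZMod p) ⋊[φ] Multiplicative (ZMod q))))
            = (Rh (e : MulAut (Multiplicative (ZMod p) ⋊[φ] Multiplicative (ZMod q))) :
                ZMod p) := rfl
          _ = 1 := by rw [he]; rfl
      exact Subtype.ext (ker_ext hq.one_lt hmod hg hφ (hk e₁) (hk e₂) h12)
    calc Nat.card Rh.ker ≤ Nat.card (ZMod p) := Nat.card_le_card_of_injective _ hinj
      _ = p := Nat.card_zmod p
  -- image of C
  have hmapC : C.map Rh = zpowers (Rh β) := by
    rw [hC, MonoidHom.map_closure, Set.image_pair, hRα]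
    have h1 : Subgroup.closure ({1, Rh β} : Set (ZMod p)ˣ) = Subgroup.closure {Rh β} := by
      apply le_antisymm
      · rw [closure_le]
        intro x hx
        simp only [Set.mem_insert_iff, Set.mem_singleton_iff] at hx
        rcases hx with rfl | rfl
        · exact one_mem _
        · exact subset_closure rfl
      · exact closure_mono (by intro x hx; simp only [Set.mem_singleton_iff] at hx; simp [hx])
    rw [h1, ← zpowers_eq_closure]
  have hcardmapC : Nat.card (C.map Rh) = q := by
    rw [hmapC, Nat.card_zpowers, hordβ]
  have hcardinfC : Nat.card (Rh.ker ⊓ C :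
      Subgroup (MulAut (Multiplicative (ZMod p) ⋊[φ] Multiplicative (ZMod q)))) = p := by
    have hle : Nat.card (Rh.ker ⊓ C :
        Subgroup (MulAut (Multiplicative (ZMod p) ⋊[φ] Multiplicative (ZMod q)))) ≤ p :=
      le_trans (Subgroup.card_le_of_le inf_le_left) hker_le
    have hge : p ≤ Nat.card (Rh.ker ⊓ C :
        Subgroup (MulAut (Multiplicative (ZMod p) ⋊[φ] Multiplicative (ZMod q)))) := by
      have hzle : zpowers α ≤ Rh.ker ⊓ C :=
        le_inf (zpowers_le.mpr hαker)
          (zpowers_le.mpr (subset_closure (Set.mem_insert _ _)))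
      calc p = Nat.card (zpowers α) := by rw [Nat.card_zpowers, hordα]
        _ ≤ _ := Subgroup.card_le_of_le hzle
    omega
  have hcardC : Nat.card C = p * q := by
    rw [card_eq_card_map_mul_card_inf_ker Rh C, hcardmapC, hcardinfC]
    ring
  refine ⟨hcardC, ?_⟩
  intro H hH
  have hcardH := card_eq_card_map_mul_card_inf_ker Rh H
  rw [hH] at hcardH
  have hdvd1 : Nat.card (H.map Rh) ∣ p - 1 := by
    have h1 := Subgroup.card_subgroup_dvd_card (H.map Rh)
    have h2 : Nat.card (ZMod p)ˣ = p - 1 := by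
      rw [Nat.card_eq_fintype_card, ZMod.card_units]
    rwa [h2] at h1
  have hdvdpq : Nat.card (H.map Rh) ∣ p * q := ⟨_, hcardH⟩
  have hcop : Nat.Coprime (Nat.card (H.map Rh)) p := by
    refine Nat.Coprime.symm (hp.coprime_iff_not_dvd.mpr ?_)
    intro hpd
    have h2 : p ∣ p - 1 := hpd.trans hdvd1
    have h3 := Nat.le_of_dvd (by omega) h2
    omega
  have hdvdq : Nat.card (H.map Rh) ∣ q := hcop.dvd_of_dvd_mul_left hdvdpq
  have hinfH_le : Nat.card (Rh.ker ⊓ H :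
      Subgroup (MulAut (Multiplicative (ZMod p) ⋊[φ] Multiplicative (ZMod q)))) ≤ p :=
    le_trans (Subgroup.card_le_of_le inf_le_left) hker_le
  have hn1 : Nat.card (H.map Rh) = q := by
    rcases hq.eq_one_or_self_of_dvd _ hdvdq with h1 | h1
    · exfalso
      rw [h1, one_mul] at hcardH
      have h4 : p * q ≤ p := by rw [hcardH]; exact hinfH_le
      have h5 : p * 2 ≤ p * q := Nat.mul_le_mul_left p hq.two_le
      have h6 : p * 2 ≤ p := le_trans h5 h4
      omega
    · exact h1
  have hn2 : Nat.card (Rh.ker ⊓ H :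
      Subgroup (MulAut (Multiplicative (ZMod p) ⋊[φ] Multiplicative (ZMod q)))) = p := by
    rw [hn1] at hcardH
    have h4 : q * p = q * Nat.card (Rh.ker ⊓ H :
        Subgroup (MulAut (Multiplicative (ZMod p) ⋊[φ] Multiplicative (ZMod q)))) := by
      rw [mul_comm q p]; exact hcardH
    exact (Nat.eq_of_mul_eq_mul_left hq.pos h4).symm
  have hkerH : Rh.ker ≤ H := by
    have heq : Rh.ker ⊓ H = Rh.ker :=
      subgroup_eq_of_le_of_card_le inf_le_left (by rw [hn2]; exact hker_le)
    rw [← heq]; exact inf_le_right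
  have hkerC : Rh.ker ≤ C := by
    have heq : Rh.ker ⊓ C = Rh.ker :=
      subgroup_eq_of_le_of_card_le inf_le_left (by rw [hcardinfC]; exact hker_le)
    rw [← heq]; exact inf_le_right
  have hmapeq : H.map Rh = C.map Rh :=
    cyclic_subgroup_eq_of_card_eq (by rw [hn1, hcardmapC])
  calc H = (H.map Rh).comap Rh := (Subgroup.comap_map_eq_self hkerH).symm
    _ = (C.map Rh).comap Rh := by rw [hmapeq]
    _ = C := Subgroup.comap_map_eq_self hkerC
end
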